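/- arXiv:2512.15060 — 4 statements merged into one kernel-verified Lean document; each statement's English description precedes it below -/
import Mathlib

section
/- For every n ∈ ℕ, every A : Fin n → Fin n → ℂ, every κ ∈ ℂ, all a, b ∈ W and every s ∈ V: (a ⋆ b) ⊛_κ s = a ⊛_κ (b ⊛_κ s). Hence the level-κ fibrewise Bargmann–Fock action makes V a module over the algebra (W, ⋆). (This is equation (4.7) of the paper, the fibrewise statement underlying Proposition 4.5.) -/
open MvPolynomial

noncomputable section

/-- The fibre of the Weyl bundle: polynomials in the variables `u_i = X (Sum.inl i)` and
`ǔ_j = X (Sum.inr j)` over `R = ℂ[ħ]`. -/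
abbrev Wn (n : ℕ) : Type := MvPolynomial (Fin n ⊕ Fin n) (Polynomial ℂ)

/-- The fibre of geometric quantization: polynomials in the `u` variables over `ℂ`. -/
abbrev Vn (n : ℕ) : Type := MvPolynomial (Fin n) ℂ

/-- Iterated formal partial derivative along a list of variables. -/
def pdList {σ : Type} [DecidableEq σ] (l : List σ) (a : MvPolynomial σ (Polynomial ℂ)) :
    MvPolynomial σ (Polynomial ℂ) :=
  l.foldr (fun i b => MvPolynomial.pderiv i b) a

/-- The star product with separation of variables on `Wn n`, with constant structure
coefficients `ω^{ǰi} = A j i`. -/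
def starSV (n : ℕ) (A : Fin n → Fin n → ℂ) (a b : Wn n) : Wn n :=
  ∑ r ∈ Finset.range (a.totalDegree + 1),
    MvPolynomial.C (Polynomial.C ((r.factorial : ℂ)⁻¹) * Polynomial.X ^ r) *
      ∑ I : Fin r → Fin n, ∑ J : Fin r → Fin n,
        MvPolynomial.C (Polynomial.C (∏ t, A (J t) (I t))) *
          pdList (List.ofFn fun t => (Sum.inr (J t) : Fin n ⊕ Fin n)) a *
          pdList (List.ofFn fun t => (Sum.inl (I t) : Fin n ⊕ Fin n)) b

/-- The first-order operator `D_j = Σ_i A j i ∂_{u_i}` on `Vn n`. -/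
def Dop (n : ℕ) (A : Fin n → Fin n → ℂ) (j : Fin n) : Vn n →ₗ[ℂ] Vn n :=
  ∑ i, A j i • (MvPolynomial.pderiv i).toLinearMap

/-- The (commuting) composite `D^δ = ∏_j D_j^{δ j}`. -/
def Dpow (n : ℕ) (A : Fin n → Fin n → ℂ) (δ : Fin n → ℕ) : Vn n →ₗ[ℂ] Vn n :=
  (List.ofFn fun j => (Dop n A j) ^ (δ j)).prod

/-- The level-`κ` fibrewise Bargmann–Fock action of `Wn n` on `Vn n`:
on a monomial `ħ^l u^γ ǔ^δ` it acts by `s ↦ κ^{l+|δ|} u^γ D^δ s`. -/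
def bfAct (n : ℕ) (A : Fin n → Fin n → ℂ) (κ : ℂ) (a : Wn n) (s : Vn n) : Vn n :=
  ∑ d ∈ a.support,
    Polynomial.sum (MvPolynomial.coeff d a) (fun l c =>
      (c * κ ^ (l + ∑ j, d (Sum.inr j))) •
        ((∏ i, (MvPolynomial.X i : Vn n) ^ d (Sum.inl i)) *
          Dpow n A (fun j => d (Sum.inr j)) s))


/-!
Write `Op w` for the operator `s ↦ w ⊛_κ s`; it is `ℂ`-linear in `w`, and the claim is
`Op (a ⋆ b) = Op a ∘ Op b`, proved by induction on `a` along multiplication by generators.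
On the operator side `Op (u_i w) = u_i · Op w`, `Op (ǔ_j w) = κ Op w ∘ D_j`, `Op (ħ w) = κ Op w`,
and, since `∂_{u_i}` commutes with every `D_j`, `[D_j, Op w] = Σ_i A j i · Op (∂_{u_i} w)`.
On the star product side, with `a ⋆ b = Σ_r ħ^r / r! · B_r(a, b)`, the first `ǔ`-derivative in
`B_{r+1}` gives `B_{r+1}(ǔ_j a, b) = ǔ_j B_{r+1}(a, b) + (r + 1) Σ_i A j i B_r(a, ∂_{u_i} b)`,
hence `(u_i a) ⋆ b = u_i (a ⋆ b)` and `(ǔ_j a) ⋆ b = ǔ_j (a ⋆ b) + ħ Σ_i A j i · a ⋆ ∂_{u_i} b`.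
The two sides of the claim then obey the same recursion.
-/

namespace MvPolynomial

variable {R σ : Type*} [CommSemiring R]

theorem pderiv_comm (i j : σ) (p : MvPolynomial σ R) :
    pderiv i (pderiv j p) = pderiv j (pderiv i p) := by
  classical
  induction p using MvPolynomial.induction_on with
  | C c => simp
  | add p q hp hq => simp [hp, hq]
  | mul_X p k ih =>
    simp only [pderiv_mul, map_add, pderiv_X, ih, Pi.single_apply]
    split_ifs <;> simp; ring

theorem pderiv_prod_X_pow [Fintype σ] [DecidableEq σ] (g : σ → ℕ) (i : σ) :
    pderiv i (∏ k, X k ^ g k : MvPolynomial σ R) =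
      g i • ∏ k, X k ^ Function.update g i (g i - 1) k := by
  have hsplit : ∀ g : σ → ℕ, (∏ k, X k ^ g k : MvPolynomial σ R) =
      X i ^ g i * ∏ k ∈ Finset.univ.erase i, X k ^ g k := fun g =>
    (Finset.mul_prod_erase _ _ (Finset.mem_univ i)).symm
  have hrest : ∏ k ∈ Finset.univ.erase i,
      (X k ^ Function.update g i (g i - 1) k : MvPolynomial σ R) =
      ∏ k ∈ Finset.univ.erase i, X k ^ g k :=
    Finset.prod_congr rfl fun k hk => by rw [Function.update_of_ne (Finset.ne_of_mem_erase hk)]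
  have hconst : pderiv i (∏ k ∈ Finset.univ.erase i, (X k ^ g k : MvPolynomial σ R)) = 0 :=
    Finset.prod_induction _ (fun p => pderiv i p = 0) (fun p q hp hq => by simp [hp, hq])
      (Derivation.map_one_eq_zero _) fun k hk => by
        rw [pderiv_pow, pderiv_X_of_ne (Finset.ne_of_mem_erase hk), mul_zero]
  rw [hsplit, hsplit, hrest, pderiv_mul, hconst, pderiv_pow, pderiv_X]
  simp [nsmul_eq_mul, mul_assoc]

theorem totalDegree_X_mul_lt (v : σ) (a : MvPolynomial σ R) :
    (X v * a).totalDegree < a.totalDegree + 2 := by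
  have hX : (X v : MvPolynomial σ R).totalDegree ≤ 1 :=
    (totalDegree_monomial_le (Finsupp.single v 1) (1 : R)).trans (by simp)
  have := totalDegree_mul (X v) a
  omega

end MvPolynomial

theorem List.prod_ofFn_pow_add_single {M : Type*} [Monoid M] {m : ℕ} (f : Fin m → M)
    (hf : ∀ k l, Commute (f k) (f l)) (δ : Fin m → ℕ) (j : Fin m) :
    (List.ofFn fun k => f k ^ (δ k + (Pi.single j 1 : Fin m → ℕ) k)).prod =
      (List.ofFn fun k => f k ^ δ k).prod * f j := by
  induction m with
  | zero => exact j.elim0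
  | succ m ih =>
    simp only [List.ofFn_succ, List.prod_cons]
    cases j using Fin.cases with
    | zero =>
      have hcomm : Commute (f 0) (List.ofFn fun k => f k.succ ^ δ k.succ).prod :=
        Commute.list_prod_right _ _ fun x hx => by
          obtain ⟨k, rfl⟩ := List.mem_ofFn.1 hx
          exact (hf 0 k.succ).pow_right _
      simp [pow_succ, mul_assoc, hcomm.eq]
    | succ j =>
      have := ih (fun k => f k.succ) (fun k l => hf _ _) (fun k => δ k.succ) j
      simp only [Pi.single_apply, Fin.succ_inj] at this ⊢
      simp [this, (Fin.succ_ne_zero j).symm, mul_assoc]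

section pdList

variable {σ : Type} [DecidableEq σ]

@[simp] theorem pdList_cons (x : σ) (l : List σ) (a : MvPolynomial σ (Polynomial ℂ)) :
    pdList (x :: l) a = pderiv x (pdList l a) := rfl

@[simp] theorem pdList_zero (l : List σ) : pdList l (0 : MvPolynomial σ (Polynomial ℂ)) = 0 := by
  induction l with
  | nil => rfl
  | cons x l ih => simp [ih]

theorem pdList_add (l : List σ) (a b : MvPolynomial σ (Polynomial ℂ)) :
    pdList l (a + b) = pdList l a + pdList l b := by
  induction l with
  | nil => rfl
  | cons x l ih => simp [ih]

theorem pdList_pderiv (l : List σ) (x : σ) (a : MvPolynomial σ (Polynomial ℂ)) :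
    pdList l (pderiv x a) = pderiv x (pdList l a) := by
  induction l with
  | nil => rfl
  | cons y l ih => simp [ih, pderiv_comm]

theorem pdList_X_mul {l : List σ} {v : σ} (hv : v ∉ l) (a : MvPolynomial σ (Polynomial ℂ)) :
    pdList l (X v * a) = X v * pdList l a := by
  induction l with
  | nil => rfl
  | cons y l ih =>
    rw [List.mem_cons, not_or] at hv
    simp [ih hv.2, pderiv_X_of_ne hv.1]

theorem pdList_monomial_eq_zero {l : List σ} {d : σ →₀ ℕ} (h : d.degree < l.length)
    (q : Polynomial ℂ) : pdList l (monomial d q) = 0 := by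
  induction l generalizing d q with
  | nil => exact absurd h (Nat.not_lt_zero _)
  | cons x l ih =>
    rw [pdList_cons, ← pdList_pderiv, pderiv_monomial]
    by_cases hx : d x = 0
    · simp [hx]
    · have hdeg := Finsupp.weight_sub_single_add (w := fun _ => 1) hx
      rw [← Finsupp.degree_eq_weight_one] at hdeg
      exact ih (by simp at h hdeg; omega) _

theorem pdList_eq_zero_of_totalDegree_lt {l : List σ} {a : MvPolynomial σ (Polynomial ℂ)}
    (h : a.totalDegree < l.length) : pdList l a = 0 := by
  rw [← support_sum_monomial_coeff a]
  exact (map_sum (AddMonoidHom.mk' (pdList l) (pdList_add l)) _ _).trans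
    (Finset.sum_eq_zero fun d hd => pdList_monomial_eq_zero ((le_totalDegree hd).trans_lt h) _)

end pdList

section Dop

variable {n : ℕ} (A : Fin n → Fin n → ℂ)

theorem pderiv_commute_Dop (i j : Fin n) : Commute (pderiv i).toLinearMap (Dop n A j) :=
  Commute.sum_right _ _ _ fun k _ => .smul_right (LinearMap.ext fun p => pderiv_comm i k p) _

theorem pderiv_commute_Dpow (i : Fin n) (δ : Fin n → ℕ) :
    Commute (pderiv i).toLinearMap (Dpow n A δ) :=
  Commute.list_prod_right _ _ fun x hx => by
    obtain ⟨k, rfl⟩ := List.mem_ofFn.1 hx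
    exact (pderiv_commute_Dop A i k).pow_right _

theorem Dop_commute (j k : Fin n) : Commute (Dop n A j) (Dop n A k) :=
  Commute.sum_left _ _ _ fun i _ => (pderiv_commute_Dop A i k).smul_left _

theorem Dpow_zero : Dpow n A 0 = 1 := by
  simp [Dpow]

theorem Dpow_add_single (δ : Fin n → ℕ) (j : Fin n) :
    Dpow n A (δ + Pi.single j 1) = Dpow n A δ * Dop n A j :=
  List.prod_ofFn_pow_add_single _ (Dop_commute A) δ j

end Dop

section BargmannFock

variable {n : ℕ} (A : Fin n → Fin n → ℂ) (κ : ℂ)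

def bfMonomial (d : (Fin n ⊕ Fin n) →₀ ℕ) : Module.End ℂ (Vn n) :=
  κ ^ (∑ j, d (Sum.inr j)) •
    (LinearMap.mulLeft ℂ (∏ i, (X i : Vn n) ^ d (Sum.inl i)) * Dpow n A fun j => d (Sum.inr j))

def bfOp : Wn n →ₗ[ℂ] Module.End ℂ (Vn n) :=
  Finsupp.lsum ℂ (fun d => (Polynomial.leval κ).smulRight (bfMonomial A κ d)) ∘ₗ
    (AddMonoidAlgebra.coeffLinearEquiv ℂ).toLinearMap

theorem bfAct_eq_bfOp (a : Wn n) (s : Vn n) : bfAct n A κ a s = bfOp A κ a s := by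
  simp [bfAct, bfOp, bfMonomial, sum_def, LinearMap.sum_apply, Polynomial.eval_eq_sum,
    Polynomial.sum_def, Finset.sum_mul, Finset.sum_smul, pow_add, mul_assoc, smul_smul]

theorem bfOp_monomial (d : (Fin n ⊕ Fin n) →₀ ℕ) (q : Polynomial ℂ) :
    bfOp A κ (monomial d q) = q.eval κ • bfMonomial A κ d := by
  simp [bfOp, ← single_eq_monomial]

theorem bfMonomial_zero : bfMonomial A κ 0 = 1 :=
  LinearMap.ext fun s => by simp [bfMonomial, ← Pi.zero_def, Dpow_zero]

theorem bfMonomial_single_inl_add (i : Fin n) (d : (Fin n ⊕ Fin n) →₀ ℕ) :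
    bfMonomial A κ (Finsupp.single (Sum.inl i) 1 + d) =
      LinearMap.mulLeft ℂ (X i) * bfMonomial A κ d := by
  refine LinearMap.ext fun s => ?_
  simp only [bfMonomial, Finsupp.add_apply, pow_add, Finset.prod_mul_distrib]
  simp [Finsupp.single_apply]

theorem bfMonomial_single_inr_add (j : Fin n) (d : (Fin n ⊕ Fin n) →₀ ℕ) :
    bfMonomial A κ (Finsupp.single (Sum.inr j) 1 + d) = κ • (bfMonomial A κ d * Dop n A j) := by
  have hδ : (fun j' => (Finsupp.single (Sum.inr j) 1 + d : (Fin n ⊕ Fin n) →₀ ℕ) (Sum.inr j')) =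
      (fun j' => d (Sum.inr j')) + Pi.single j 1 := by
    ext j'; simp [Finsupp.single_apply, Pi.single_apply, eq_comm, add_comm]
  unfold bfMonomial
  rw [hδ, Dpow_add_single]
  refine LinearMap.ext fun s => ?_
  simp [Finset.sum_add_distrib, pow_add, smul_smul, mul_comm]

theorem pderiv_mul_bfMonomial (i : Fin n) (d : (Fin n ⊕ Fin n) →₀ ℕ) :
    (pderiv i).toLinearMap * bfMonomial A κ d =
      bfMonomial A κ d * (pderiv i).toLinearMap +
        (d (Sum.inl i) : ℂ) • bfMonomial A κ (d - Finsupp.single (Sum.inl i) 1) := by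
  have hγ : Function.update (fun k => d (Sum.inl k)) i (d (Sum.inl i) - 1) =
      fun k => (d - Finsupp.single (Sum.inl i) 1 : (Fin n ⊕ Fin n) →₀ ℕ) (Sum.inl k) := by
    ext k; by_cases h : k = i <;> simp [h]
  have hδ : ∀ j, (d - Finsupp.single (Sum.inl i) 1 : (Fin n ⊕ Fin n) →₀ ℕ) (Sum.inr j) =
      d (Sum.inr j) := by simp
  refine LinearMap.ext fun s => ?_
  have hD := LinearMap.congr_fun (pderiv_commute_Dpow A i fun j => d (Sum.inr j)).eq s
  simp only [Module.End.mul_apply, Derivation.coeFn_coe] at hD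
  simp only [bfMonomial, Module.End.mul_apply, LinearMap.smul_apply, LinearMap.add_apply,
    Derivation.coeFn_coe, map_smul, LinearMap.mulLeft_apply, pderiv_mul, pderiv_prod_X_pow, hγ,
    hD, hδ]
  rw [smul_add, add_comm, smul_comm, ← Nat.cast_smul_eq_nsmul ℂ, smul_mul_assoc, mul_comm]

theorem bfOp_C_mul (p : Polynomial ℂ) (w : Wn n) :
    bfOp A κ (C p * w) = p.eval κ • bfOp A κ w := by
  induction w using MvPolynomial.induction_on' with
  | monomial d q =>
    rw [C_mul_monomial, bfOp_monomial, bfOp_monomial, Polynomial.eval_mul, mul_smul]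
  | add w₁ w₂ h₁ h₂ => rw [mul_add, map_add, map_add, h₁, h₂, smul_add]

theorem bfOp_one : bfOp A κ 1 = 1 := by
  rw [← C_1, ← monomial_zero', bfOp_monomial, bfMonomial_zero, Polynomial.eval_one, one_smul]

theorem bfOp_C (p : Polynomial ℂ) : bfOp A κ (C p) = p.eval κ • 1 := by
  simpa [bfOp_one] using bfOp_C_mul A κ p 1

theorem bfOp_X_inl_mul (i : Fin n) (w : Wn n) :
    bfOp A κ (X (Sum.inl i) * w) = LinearMap.mulLeft ℂ (X i) * bfOp A κ w := by
  induction w using MvPolynomial.induction_on' with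
  | monomial d q =>
    rw [X, monomial_mul, one_mul, bfOp_monomial, bfOp_monomial, bfMonomial_single_inl_add,
      mul_smul_comm]
  | add w₁ w₂ h₁ h₂ => rw [mul_add, map_add, map_add, h₁, h₂, mul_add]

theorem bfOp_X_inr_mul (j : Fin n) (w : Wn n) :
    bfOp A κ (X (Sum.inr j) * w) = κ • (bfOp A κ w * Dop n A j) := by
  induction w using MvPolynomial.induction_on' with
  | monomial d q =>
    rw [X, monomial_mul, one_mul, bfOp_monomial, bfOp_monomial, bfMonomial_single_inr_add,
      smul_mul_assoc, smul_comm]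
  | add w₁ w₂ h₁ h₂ => rw [mul_add, map_add, map_add, h₁, h₂, add_mul, smul_add]

theorem pderiv_mul_bfOp (i : Fin n) (w : Wn n) :
    (pderiv i).toLinearMap * bfOp A κ w =
      bfOp A κ w * (pderiv i).toLinearMap + bfOp A κ (pderiv (Sum.inl i) w) := by
  induction w using MvPolynomial.induction_on' with
  | monomial d q =>
    rw [pderiv_monomial, bfOp_monomial, bfOp_monomial, mul_smul_comm, pderiv_mul_bfMonomial,
      smul_add, smul_mul_assoc, Polynomial.eval_mul, mul_smul]
    simp
  | add w₁ w₂ h₁ h₂ =>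
    rw [map_add, mul_add, h₁, h₂, map_add, map_add, add_mul]
    abel

theorem Dop_mul_bfOp (j : Fin n) (w : Wn n) :
    Dop n A j * bfOp A κ w =
      bfOp A κ w * Dop n A j + ∑ i, A j i • bfOp A κ (pderiv (Sum.inl i) w) := by
  simp only [Dop, Finset.sum_mul, Finset.mul_sum, smul_mul_assoc, mul_smul_comm,
    pderiv_mul_bfOp, smul_add, Finset.sum_add_distrib]

end BargmannFock

section StarProduct

variable {n : ℕ} (A : Fin n → Fin n → ℂ)

def starCoeff (r : ℕ) (a b : Wn n) : Wn n :=
  ∑ I : Fin r → Fin n, ∑ J : Fin r → Fin n, (∏ t, A (J t) (I t)) •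
    (pdList (List.ofFn fun t => (Sum.inr (J t) : Fin n ⊕ Fin n)) a *
      pdList (List.ofFn fun t => (Sum.inl (I t) : Fin n ⊕ Fin n)) b)

theorem starCoeff_zero (a b : Wn n) : starCoeff A 0 a b = a * b := by
  simp [starCoeff, pdList]

theorem starCoeff_succ (r : ℕ) (a b : Wn n) :
    starCoeff A (r + 1) a b =
      ∑ j, ∑ i, A j i • starCoeff A r (pderiv (Sum.inr j) a) (pderiv (Sum.inl i) b) := by
  have hsplit : ∀ F : (Fin (r + 1) → Fin n) → Wn n,
      ∑ I, F I = ∑ i, ∑ I : Fin r → Fin n, F (Fin.cons i I) := fun F => by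
    rw [← (Fin.consEquiv fun _ => Fin n).sum_comp F, Fintype.sum_prod_type]
    rfl
  simp only [starCoeff, hsplit, Fin.prod_univ_succ, Fin.cons_zero, Fin.cons_succ, List.ofFn_succ,
    pdList_cons, pdList_pderiv, Finset.smul_sum, smul_smul]
  exact (Finset.sum_congr rfl fun i _ => Finset.sum_comm).trans Finset.sum_comm

theorem starCoeff_zero_left (r : ℕ) (b : Wn n) : starCoeff A r 0 b = 0 := by
  simp [starCoeff]

theorem starCoeff_add_left (r : ℕ) (a₁ a₂ b : Wn n) :
    starCoeff A r (a₁ + a₂) b = starCoeff A r a₁ b + starCoeff A r a₂ b := by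
  simp [starCoeff, pdList_add, add_mul, smul_add, Finset.sum_add_distrib]

theorem starCoeff_X_inl_mul (r : ℕ) (i : Fin n) (a b : Wn n) :
    starCoeff A r (X (Sum.inl i) * a) b = X (Sum.inl i) * starCoeff A r a b := by
  simp [starCoeff, pdList_X_mul, Finset.mul_sum, mul_assoc]

theorem starCoeff_succ_X_inr_mul (r : ℕ) (j : Fin n) (a b : Wn n) :
    starCoeff A (r + 1) (X (Sum.inr j) * a) b =
      ∑ j', ∑ i, A j' i •
          starCoeff A r (X (Sum.inr j) * pderiv (Sum.inr j') a) (pderiv (Sum.inl i) b) +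
        ∑ i, A j i • starCoeff A r a (pderiv (Sum.inl i) b) := by
  have hderiv : ∀ j', pderiv (Sum.inr j') (X (Sum.inr j) * a) =
      X (Sum.inr j) * pderiv (Sum.inr j') a + if j' = j then a else 0 := fun j' => by
    simp [pderiv_X, Pi.single_apply, eq_comm, add_comm]
  simp only [starCoeff_succ, hderiv, starCoeff_add_left, smul_add, Finset.sum_add_distrib]
  rw [add_right_inj, Finset.sum_comm]
  refine Finset.sum_congr rfl fun i _ => ?_
  rw [Fintype.sum_eq_single j fun j' hj' => by rw [if_neg hj', starCoeff_zero_left, smul_zero],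
    if_pos rfl]

theorem starCoeff_X_inr_mul (j : Fin n) : ∀ (r : ℕ) (a b : Wn n),
    starCoeff A (r + 1) (X (Sum.inr j) * a) b =
      X (Sum.inr j) * starCoeff A (r + 1) a b +
        ((r + 1 : ℕ) : ℂ) • ∑ i, A j i • starCoeff A r a (pderiv (Sum.inl i) b)
  | 0, a, b => by
    rw [starCoeff_succ_X_inr_mul]
    simp [starCoeff_zero, starCoeff_succ, Finset.mul_sum, mul_assoc]
  | r + 1, a, b => by
    have hcomm : ∀ k, starCoeff A (r + 1) a (pderiv (Sum.inl k) b) =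
        ∑ j', ∑ i, A j' i • starCoeff A r (pderiv (Sum.inr j') a)
          (pderiv (Sum.inl k) (pderiv (Sum.inl i) b)) := fun k => by
      rw [starCoeff_succ]; simp only [pderiv_comm (Sum.inl k)]
    rw [starCoeff_succ_X_inr_mul]
    simp only [starCoeff_X_inr_mul j r, smul_add, Finset.sum_add_distrib, hcomm]
    rw [starCoeff_succ A (r + 1) a b, add_assoc, Nat.cast_succ (r + 1), add_smul, one_smul]
    refine congrArg₂ (· + ·) ?_ (congrArg (· + _) ?_)
    · simp only [Finset.mul_sum, mul_smul_comm]
    · simp only [Finset.smul_sum, smul_smul]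
      refine ((Finset.sum_congr rfl fun _ _ => Finset.sum_comm).trans Finset.sum_comm).trans
        (Finset.sum_congr rfl fun _ _ => Finset.sum_congr rfl fun _ _ =>
          Finset.sum_congr rfl fun _ _ => congrArg (· • _) (by ring))

theorem starCoeff_eq_zero_of_totalDegree_lt {r : ℕ} {a : Wn n} (h : a.totalDegree < r)
    (b : Wn n) : starCoeff A r a b = 0 :=
  Finset.sum_eq_zero fun I _ => Finset.sum_eq_zero fun J _ => by
    rw [pdList_eq_zero_of_totalDegree_lt (by simpa using h), zero_mul, smul_zero]

def starTerm (r : ℕ) (a b : Wn n) : Wn n :=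
  C (Polynomial.C ((r.factorial : ℂ)⁻¹) * Polynomial.X ^ r) * starCoeff A r a b

theorem starTerm_zero (a b : Wn n) : starTerm A 0 a b = a * b := by
  simp [starTerm, starCoeff_zero]

theorem starTerm_add_left (r : ℕ) (a₁ a₂ b : Wn n) :
    starTerm A r (a₁ + a₂) b = starTerm A r a₁ b + starTerm A r a₂ b := by
  rw [starTerm, starCoeff_add_left, mul_add, starTerm, starTerm]

theorem starTerm_X_inl_mul (r : ℕ) (i : Fin n) (a b : Wn n) :
    starTerm A r (X (Sum.inl i) * a) b = X (Sum.inl i) * starTerm A r a b := by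
  rw [starTerm, starCoeff_X_inl_mul, mul_left_comm, starTerm]

theorem starTerm_succ_X_inr_mul (r : ℕ) (j : Fin n) (a b : Wn n) :
    starTerm A (r + 1) (X (Sum.inr j) * a) b =
      X (Sum.inr j) * starTerm A (r + 1) a b +
        C Polynomial.X * ∑ i, A j i • starTerm A r a (pderiv (Sum.inl i) b) := by
  have hfac : ((r + 1).factorial : ℂ)⁻¹ * ((r + 1 : ℕ) : ℂ) = (r.factorial : ℂ)⁻¹ := by
    rw [Nat.factorial_succ]
    push_cast
    field_simp
  simp only [starTerm, starCoeff_X_inr_mul, mul_add, mul_left_comm _ (X _), ← hfac,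
    ← mul_smul_comm, ← Finset.mul_sum]
  congr 1
  simp only [Algebra.smul_def, map_natCast, map_mul, pow_succ]
  ring

theorem starSV_eq_sum_starTerm {N : ℕ} {a : Wn n} (h : a.totalDegree < N) (b : Wn n) :
    starSV n A a b = ∑ r ∈ Finset.range N, starTerm A r a b := by
  have hdef : starSV n A a b = ∑ r ∈ Finset.range (a.totalDegree + 1), starTerm A r a b := by
    simp only [starSV, starTerm, starCoeff, Algebra.smul_def, mul_assoc]
    rfl
  rw [hdef]
  refine Finset.sum_subset (Finset.range_subset_range.2 h) fun r _ hr => ?_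
  rw [starTerm, starCoeff_eq_zero_of_totalDegree_lt A (by simpa using hr), mul_zero]

theorem starSV_C_mul (p : Polynomial ℂ) (b : Wn n) : starSV n A (C p) b = C p * b := by
  rw [starSV_eq_sum_starTerm A (N := 1) (by simp), Finset.sum_range_one, starTerm_zero]

theorem starSV_add_left (a₁ a₂ b : Wn n) :
    starSV n A (a₁ + a₂) b = starSV n A a₁ b + starSV n A a₂ b := by
  have h := totalDegree_add a₁ a₂
  set N := a₁.totalDegree + a₂.totalDegree + 1
  rw [starSV_eq_sum_starTerm A (N := N) (by omega), starSV_eq_sum_starTerm A (N := N) (by omega),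
    starSV_eq_sum_starTerm A (N := N) (by omega), ← Finset.sum_add_distrib]
  exact Finset.sum_congr rfl fun r _ => starTerm_add_left A r a₁ a₂ b

theorem starSV_X_inl_mul (i : Fin n) (a b : Wn n) :
    starSV n A (X (Sum.inl i) * a) b = X (Sum.inl i) * starSV n A a b := by
  rw [starSV_eq_sum_starTerm A (totalDegree_X_mul_lt _ a),
    starSV_eq_sum_starTerm A (N := a.totalDegree + 2) (by omega), Finset.mul_sum]
  exact Finset.sum_congr rfl fun r _ => starTerm_X_inl_mul A r i a b

theorem starSV_X_inr_mul (j : Fin n) (a b : Wn n) :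
    starSV n A (X (Sum.inr j) * a) b =
      X (Sum.inr j) * starSV n A a b +
        C Polynomial.X * ∑ i, A j i • starSV n A a (pderiv (Sum.inl i) b) := by
  rw [starSV_eq_sum_starTerm A (totalDegree_X_mul_lt _ a),
    starSV_eq_sum_starTerm A (N := a.totalDegree + 2) (by omega), Finset.sum_range_succ',
    Finset.sum_range_succ' _ (a.totalDegree + 1)]
  simp only [starTerm_succ_X_inr_mul, starTerm_zero, Finset.sum_add_distrib, mul_add,
    Finset.mul_sum, starSV_eq_sum_starTerm A (lt_add_one a.totalDegree), Finset.smul_sum,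
    mul_assoc]
  rw [Finset.sum_comm (s := Finset.range _), add_right_comm]

end StarProduct

theorem bfOp_starSV {n : ℕ} (A : Fin n → Fin n → ℂ) (κ : ℂ) (a b : Wn n) :
    bfOp A κ (starSV n A a b) = bfOp A κ a * bfOp A κ b := by
  induction a using MvPolynomial.induction_on generalizing b with
  | C p => rw [starSV_C_mul, bfOp_C_mul, bfOp_C, smul_mul_assoc, one_mul]
  | add p q hp hq => rw [starSV_add_left, map_add, hp, hq, map_add, add_mul]
  | mul_X p v ih =>
    rw [mul_comm]
    cases v with
    | inl i => rw [starSV_X_inl_mul, bfOp_X_inl_mul, ih, bfOp_X_inl_mul, mul_assoc]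
    | inr j =>
      rw [starSV_X_inr_mul, map_add, bfOp_X_inr_mul, bfOp_C_mul, map_sum, ih, bfOp_X_inr_mul,
        smul_mul_assoc, mul_assoc (bfOp A κ p) (Dop n A j), Dop_mul_bfOp]
      simp [ih, mul_add, Finset.mul_sum, mul_assoc, smul_add]

/-- the level-`κ` fibrewise Bargmann–Fock action is compatible with the
star product with separation of variables: `(a ⋆ b) ⊛_κ s = a ⊛_κ (b ⊛_κ s)`. -/
theorem stmt1 (n : ℕ) (A : Fin n → Fin n → ℂ) (κ : ℂ) (a b : Wn n) (s : Vn n) :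
    bfAct n A κ (starSV n A a b) s = bfAct n A κ a (bfAct n A κ b s) := by
  simp only [bfAct_eq_bfOp, bfOp_starSV, Module.End.mul_apply]

end
end

section
/- Let n ∈ ℕ, A : Fin n → Fin n → ℂ, let α ∈ W have total degree at most 1 in the ǔ-variables, and let β ∈ W contain no ǔ-variables. Then α ⋆ β − β ⋆ α = ħ · Σ_{j, i ∈ Fin n} A j i · (∂_{ǔ_j} α) · (∂_{u_i} β), where the product on the right-hand side is the ordinary (commutative) polynomial product in W. (This is the fibrewise content of Lemma 4.6: the star-commutator of a section of Ŝym Q* ⊗ P* with a ǔ-free element is ħ times a first-order pairing.) -/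
open MvPolynomial

noncomputable section

/-! A `ǔ`-derivative lowers the degree in the `ǔ`-variables by one, so the order-`r` term of
`a ⋆ b` vanishes once `r` exceeds the `ǔ`-degree of `a`. Hence `β ⋆ α` is the ordinary product
`β α`, while `α ⋆ β` is `α β` plus its first-order term `ħ Σ A j i (∂_{ǔ_j} α) (∂_{u_i} β)`. -/

theorem add_single_mem_support_of_mem_support_pderiv {σ R : Type*} [CommSemiring R]
    {i : σ} {p : MvPolynomial σ R} {d : σ →₀ ℕ} (hd : d ∈ (pderiv i p).support) :
    d + Finsupp.single i 1 ∈ p.support := by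
  rw [mem_support_iff, coeff_pderiv] at hd
  exact mem_support_iff.mpr (left_ne_zero_of_mul hd)

theorem add_sum_single_mem_support_of_mem_support_pdList {σ : Type} [DecidableEq σ]
    (l : List σ) {a : MvPolynomial σ (Polynomial ℂ)} {d : σ →₀ ℕ}
    (hd : d ∈ (pdList l a).support) :
    d + (l.map fun i => Finsupp.single i 1).sum ∈ a.support := by
  induction l generalizing d with
  | nil => simpa [pdList] using hd
  | cons i l ih =>
    rw [List.map_cons, List.sum_cons, ← add_assoc]
    exact ih (add_single_mem_support_of_mem_support_pderiv hd)

theorem pdList_eq_zero_of_weightedTotalDegree_lt {σ : Type} [DecidableEq σ] (w : σ → ℕ)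
    (l : List σ) {a : MvPolynomial σ (Polynomial ℂ)}
    (hl : weightedTotalDegree w a < (l.map w).sum) : pdList l a = 0 := by
  by_contra hne
  obtain ⟨d, hd⟩ := exists_coeff_ne_zero hne
  have hle := le_weightedTotalDegree w
    (add_sum_single_mem_support_of_mem_support_pdList l (mem_support_iff.mpr hd))
  have hweight : Finsupp.weight w (l.map fun i => Finsupp.single i 1).sum = (l.map w).sum := by
    simp [map_list_sum, List.map_map, Function.comp_def, Finsupp.weight_single]
  rw [map_add, hweight] at hle
  omega

def starSVTerm (n : ℕ) (A : Fin n → Fin n → ℂ) (a b : Wn n) (r : ℕ) : Wn n :=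
  MvPolynomial.C (Polynomial.C ((r.factorial : ℂ)⁻¹) * Polynomial.X ^ r) *
    ∑ I : Fin r → Fin n, ∑ J : Fin r → Fin n,
      MvPolynomial.C (Polynomial.C (∏ t, A (J t) (I t))) *
        pdList (List.ofFn fun t => (Sum.inr (J t) : Fin n ⊕ Fin n)) a *
        pdList (List.ofFn fun t => (Sum.inl (I t) : Fin n ⊕ Fin n)) b

section StarSVTerm

variable {n : ℕ} (A : Fin n → Fin n → ℂ) (a b : Wn n)

theorem starSVTerm_eq_zero (w : Fin n ⊕ Fin n → ℕ) (hw : ∀ j, 1 ≤ w (Sum.inr j)) {r : ℕ}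
    (hr : weightedTotalDegree w a < r) : starSVTerm n A a b r = 0 := by
  refine mul_eq_zero_of_right _ (Finset.sum_eq_zero fun I _ => Finset.sum_eq_zero fun J _ => ?_)
  suffices hJ : pdList (List.ofFn fun t => (Sum.inr (J t) : Fin n ⊕ Fin n)) a = 0 by
    rw [hJ, mul_zero, zero_mul]
  refine pdList_eq_zero_of_weightedTotalDegree_lt w _ (hr.trans_le ?_)
  calc r = ∑ _t : Fin r, 1 := by simp
    _ ≤ ∑ t, w (Sum.inr (J t)) := Finset.sum_le_sum fun t _ => hw (J t)
    _ = _ := by rw [List.map_ofFn, List.sum_ofFn]; rfl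

theorem starSV_eq_sum_range_starSVTerm (w : Fin n ⊕ Fin n → ℕ) (hw : ∀ j, 1 ≤ w (Sum.inr j))
    {N : ℕ} (hN : weightedTotalDegree w a < N) :
    starSV n A a b = ∑ r ∈ Finset.range N, starSVTerm n A a b r := by
  have hbeyond_totalDegree : ∀ r ≥ a.totalDegree + 1, starSVTerm n A a b r = 0 := fun r hr =>
    starSVTerm_eq_zero A a b 1 (fun _ => le_rfl) (by rw [weightedTotalDegree_one]; omega)
  have hbeyond_N : ∀ r ≥ N, starSVTerm n A a b r = 0 := fun r hr =>
    starSVTerm_eq_zero A a b w hw (by omega)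
  calc starSV n A a b = ∑ r ∈ Finset.range (a.totalDegree + 1), starSVTerm n A a b r := rfl
    _ = ∑ r ∈ Finset.range (max (a.totalDegree + 1) N), starSVTerm n A a b r :=
      (Finset.eventually_constant_sum hbeyond_totalDegree (le_max_left _ _)).symm
    _ = _ := Finset.eventually_constant_sum hbeyond_N (le_max_right _ _)

theorem starSVTerm_zero : starSVTerm n A a b 0 = a * b := by
  simp [starSVTerm, pdList]

theorem starSVTerm_one :
    starSVTerm n A a b 1 =
      MvPolynomial.C (Polynomial.X : Polynomial ℂ) *
        ∑ j : Fin n, ∑ i : Fin n,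
          MvPolynomial.C (Polynomial.C (A j i)) *
            (MvPolynomial.pderiv (Sum.inr j : Fin n ⊕ Fin n) a) *
            (MvPolynomial.pderiv (Sum.inl i : Fin n ⊕ Fin n) b) := by
  simp only [starSVTerm, Nat.factorial_one, Nat.cast_one, inv_one, map_one, one_mul, pow_one,
    Fin.prod_univ_one, List.ofFn_succ, List.ofFn_zero, pdList, List.foldr_cons, List.foldr_nil]
  rw [Finset.sum_comm]
  congr 1
  refine Fintype.sum_equiv (Equiv.funUnique (Fin 1) (Fin n)) _ _ fun J => ?_
  exact Fintype.sum_equiv (Equiv.funUnique (Fin 1) (Fin n)) _ _ fun I => rfl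

end StarSVTerm

theorem weight_sum_elim_zero_one {n : ℕ} (d : Fin n ⊕ Fin n →₀ ℕ) :
    Finsupp.weight (Sum.elim 0 1) d = ∑ j, d (Sum.inr j) := by
  simp [Finsupp.weight_eq_sum, Fintype.sum_sum_type]

/-- if `α` has total degree at most `1` in the `ǔ`-variables and `β` contains
no `ǔ`-variables, then the star commutator is
`α ⋆ β − β ⋆ α = ħ Σ_{j i} A j i (∂_{ǔ_j} α) (∂_{u_i} β)`. -/
theorem stmt2 (n : ℕ) (A : Fin n → Fin n → ℂ) (α β : Wn n)
    (hα : ∀ d ∈ α.support, (∑ j, d (Sum.inr j)) ≤ 1)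
    (hβ : ∀ d ∈ β.support, ∀ j : Fin n, d (Sum.inr j) = 0) :
    starSV n A α β - starSV n A β α =
      MvPolynomial.C (Polynomial.X : Polynomial ℂ) *
        ∑ j : Fin n, ∑ i : Fin n,
          MvPolynomial.C (Polynomial.C (A j i)) *
            (MvPolynomial.pderiv (Sum.inr j : Fin n ⊕ Fin n) α) *
            (MvPolynomial.pderiv (Sum.inl i : Fin n ⊕ Fin n) β) := by
  set w : Fin n ⊕ Fin n → ℕ := Sum.elim 0 1
  have hw : ∀ j, 1 ≤ w (Sum.inr j) := fun _ => le_rfl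
  have hα' : weightedTotalDegree w α < 2 := by
    refine Nat.lt_succ_of_le (Finset.sup_le fun d hd => ?_)
    rw [weight_sum_elim_zero_one]
    exact hα d hd
  have hβ' : weightedTotalDegree w β < 1 := by
    refine Nat.lt_succ_of_le (Finset.sup_le fun d hd => ?_)
    simp [w, weight_sum_elim_zero_one, hβ d hd]
  rw [starSV_eq_sum_range_starSVTerm A α β w hw hα',
    starSV_eq_sum_range_starSVTerm A β α w hw hβ', Finset.sum_range_succ, Finset.sum_range_one,
    Finset.sum_range_one, starSVTerm_zero, starSVTerm_zero, starSVTerm_one, mul_comm β α,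
    add_sub_cancel_left]

end
end

section
/- Let n ∈ ℕ and suppose the matrix (A j i)_{j,i ∈ Fin n} is invertible over ℂ. Let a ∈ W. If for every integer k ≥ 1 and every s ∈ V one has a ⊛_{√−1/k} s = 0, then a = 0. In other words, an element of the Weyl algebra that acts as zero at every level k under the Bargmann–Fock action vanishes. (This is the computational core of Lemma 5.2 of the paper, 'Uniqueness of solution'.) -/
open MvPolynomial

noncomputable section

namespace Stmt3Aux
variable {n : ℕ}

def Ppow (n : ℕ) (δ : Fin n → ℕ) : Vn n →ₗ[ℂ] Vn n :=
  (List.ofFn fun j => ((pderiv j).toLinearMap : Vn n →ₗ[ℂ] Vn n) ^ (δ j)).prod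

/-- the substitution `u_i ↦ Σ_k B k i u_k`. -/
def psi (B : Fin n → Fin n → ℂ) : Vn n →ₐ[ℂ] Vn n :=
  aeval (fun i => ∑ k, B k i • (X k : Vn n))

variable {A B : Fin n → Fin n → ℂ}

lemma Dop_apply (j : Fin n) (p : Vn n) :
    Dop n A j p = ∑ i, A j i • pderiv i p := by
  simp [Dop, Derivation.coeFn_coe]

lemma Dop_mul (j : Fin n) (p q : Vn n) :
    Dop n A j (p * q) = Dop n A j p * q + p * Dop n A j q := by
  simp only [Dop_apply, pderiv_mul, smul_add, Finset.sum_add_distrib]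
  congr 1
  · rw [Finset.sum_mul]
    exact Finset.sum_congr rfl fun x _ => (smul_mul_assoc _ _ _).symm
  · rw [Finset.mul_sum]
    exact Finset.sum_congr rfl fun x _ => (mul_smul_comm _ _ _).symm

lemma Dop_psi_X (hAB : ∀ j i, ∑ m, A j m * B m i = if j = i then 1 else 0)
    (j i : Fin n) : Dop n A j (psi B (X i)) = psi B (pderiv j (X i)) := by
  classical
  have h1 : psi B (X i) = ∑ k, B k i • (X k : Vn n) := aeval_X _ i
  have hL : Dop n A j (psi B (X i)) = (if j = i then 1 else 0 : ℂ) • (1 : Vn n) := by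
    have hder : ∀ m : Fin n, pderiv m (∑ k, B k i • (X k : Vn n)) = B m i • 1 := by
      intro m
      rw [← Derivation.coeFn_coe (pderiv m), map_sum]
      simp only [map_smul, Derivation.coeFn_coe, pderiv_X]
      rw [Finset.sum_eq_single m (fun k _ hk => by simp [Pi.single_eq_of_ne hk])
        (fun hm => absurd (Finset.mem_univ m) hm)]
      simp
    rw [h1, Dop_apply, ← hAB j i, Finset.sum_smul]
    refine Finset.sum_congr rfl fun m _ => ?_
    rw [hder m, smul_smul]
  have hR : psi B (pderiv j (X i)) = (if j = i then 1 else 0 : ℂ) • (1 : Vn n) := by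
    rw [pderiv_X]
    by_cases h : j = i
    · subst h; simp
    · rw [Pi.single_eq_of_ne (Ne.symm h)]
      simp [h]
  rw [hL, hR]

lemma Dop_psi (hAB : ∀ j i, ∑ m, A j m * B m i = if j = i then 1 else 0)
    (j : Fin n) (p : Vn n) : Dop n A j (psi B p) = psi B (pderiv j p) := by
  induction p using MvPolynomial.induction_on with
  | C r =>
    have : psi B (C r) = C r := by simp [psi, algHom_C]
    rw [this, pderiv_C, map_zero, Dop_apply]
    simp [pderiv_C]
  | add p q hp hq => simp only [map_add, hp, hq]
  | mul_X p i hp =>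
    rw [map_mul, Dop_mul, hp, Dop_psi_X hAB, pderiv_mul, map_add, map_mul, map_mul]

lemma Dop_pow_psi (hAB : ∀ j i, ∑ m, A j m * B m i = if j = i then 1 else 0)
    (j : Fin n) (k : ℕ) (p : Vn n) :
    ((Dop n A j) ^ k) (psi B p) =
      psi B ((((pderiv j).toLinearMap : Vn n →ₗ[ℂ] Vn n) ^ k) p) := by
  induction k generalizing p with
  | zero => simp
  | succ k ih =>
    rw [pow_succ, pow_succ, Module.End.mul_apply, Module.End.mul_apply,
      Derivation.coeFn_coe, Dop_psi hAB, ih]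

lemma listDpow_psi (hAB : ∀ j i, ∑ m, A j m * B m i = if j = i then 1 else 0)
    (δ : Fin n → ℕ) (L : List (Fin n)) (p : Vn n) :
    ((L.map fun j => (Dop n A j) ^ (δ j)).prod) (psi B p) =
      psi B (((L.map fun j => ((pderiv j).toLinearMap : Vn n →ₗ[ℂ] Vn n) ^ (δ j)).prod) p) := by
  induction L generalizing p with
  | nil => simp
  | cons j L ih =>
    rw [List.map_cons, List.prod_cons, List.map_cons, List.prod_cons,
      Module.End.mul_apply, Module.End.mul_apply, ih, Dop_pow_psi hAB]

lemma Dpow_psi (hAB : ∀ j i, ∑ m, A j m * B m i = if j = i then 1 else 0)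
    (δ : Fin n → ℕ) (p : Vn n) :
    Dpow n A δ (psi B p) = psi B (Ppow n δ p) := by
  rw [Dpow, Ppow, List.ofFn_eq_map, List.ofFn_eq_map, listDpow_psi hAB]





/-- iterated single-variable pderiv power on a monomial. -/
lemma pderiv_pow_monomial (i : Fin n) (k : ℕ) (d : Fin n →₀ ℕ) (c : ℂ) :
    (((pderiv i).toLinearMap : Vn n →ₗ[ℂ] Vn n) ^ k) (monomial d c) =
      monomial (d - Finsupp.single i k) (((d i).descFactorial k : ℂ) * c) := by
  induction k with
  | zero => simp
  | succ k ih =>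
    rw [pow_succ', Module.End.mul_apply, ih]
    rw [Derivation.coeFn_coe, pderiv_monomial]
    congr 1
    · rw [tsub_tsub, ← Finsupp.single_add]
    · rw [Finsupp.tsub_apply, Finsupp.single_eq_same, Nat.descFactorial_succ]
      push_cast [Nat.descFactorial_succ]
      ring

lemma listsum_single_apply_notmem (δ : Fin n → ℕ) (L : List (Fin n)) (j : Fin n)
    (hj : j ∉ L) : ((L.map fun i => Finsupp.single i (δ i)).sum) j = 0 := by
  induction L with
  | nil => simp
  | cons i L ih =>
    simp only [List.mem_cons, not_or] at hj
    simp [Finsupp.single_apply, Ne.symm hj.1, ih hj.2]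

lemma listPpow_monomial (δ : Fin n → ℕ) (L : List (Fin n)) (hL : L.Nodup)
    (d : Fin n →₀ ℕ) (c : ℂ) :
    ((L.map fun j => ((pderiv j).toLinearMap : Vn n →ₗ[ℂ] Vn n) ^ (δ j)).prod) (monomial d c) =
      monomial (d - (L.map fun j => Finsupp.single j (δ j)).sum)
        ((((L.map fun j => (d j).descFactorial (δ j)).prod : ℕ) : ℂ) * c) := by
  induction L with
  | nil => simp
  | cons j L ih =>
    rw [List.nodup_cons] at hL
    rw [List.map_cons, List.prod_cons, Module.End.mul_apply, ih hL.2,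
      pderiv_pow_monomial]
    congr 1
    · rw [tsub_tsub, List.map_cons, List.sum_cons, add_comm]
    · rw [Finsupp.tsub_apply, listsum_single_apply_notmem δ L j hL.1, Nat.sub_zero,
        List.map_cons, List.prod_cons]
      push_cast
      ring



lemma Ppow_monomial_self (δ0 : Fin n →₀ ℕ) :
    Ppow n ⇑δ0 (monomial δ0 1 : Vn n) = C ((∏ j, Nat.factorial (δ0 j) : ℕ) : ℂ) := by
  rw [Ppow, List.ofFn_eq_map, listPpow_monomial _ _ (List.nodup_finRange n)]
  rw [← List.ofFn_eq_map, ← List.ofFn_eq_map]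
  have h1 : (List.ofFn fun j => Finsupp.single j (δ0 j)).sum = δ0 := by
    rw [List.sum_ofFn, Finsupp.univ_sum_single]
  have h2 : (List.ofFn fun j => (δ0 j).descFactorial (δ0 j)).prod = ∏ j, Nat.factorial (δ0 j) := by
    rw [List.prod_ofFn]
    exact Finset.prod_congr rfl fun j _ => Nat.descFactorial_self _
  rw [h1, h2, tsub_self, mul_one]
  rfl

lemma Ppow_monomial_ne (δ : Fin n → ℕ) (δ0 : Fin n →₀ ℕ) (j0 : Fin n)
    (hj : δ0 j0 < δ j0) : Ppow n δ (monomial δ0 1 : Vn n) = 0 := by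
  rw [Ppow, List.ofFn_eq_map, listPpow_monomial _ _ (List.nodup_finRange n)]
  have h2 : (List.map (fun j => (δ0 j).descFactorial (δ j)) (List.finRange n)).prod = 0 := by
    rw [← List.ofFn_eq_map, List.prod_ofFn]
    exact Finset.prod_eq_zero (Finset.mem_univ j0)
      (Nat.descFactorial_eq_zero_iff_lt.mpr hj)
  rw [h2]
  simp

lemma prod_X_pow_univ (γ : Fin n →₀ ℕ) :
    (∏ i, (X i : Vn n) ^ γ i) = monomial γ 1 := by
  rw [← prod_X_pow_eq_monomial]
  exact (Finset.prod_subset (Finset.subset_univ _) (fun x _ hx => by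
    rw [Finsupp.notMem_support_iff.mp hx, pow_zero])).symm

lemma indep (hAB : ∀ j i, ∑ m, A j m * B m i = if j = i then 1 else 0)
    (c : ((Fin n ⊕ Fin n) →₀ ℕ) → ℂ) (F : Finset ((Fin n ⊕ Fin n) →₀ ℕ))
    (h : ∀ s : Vn n, ∑ d ∈ F,
      c d • ((∏ i, (X i : Vn n) ^ d (Sum.inl i)) * Dpow n A (fun j => d (Sum.inr j)) s) = 0) :
    ∀ d ∈ F, c d = 0 := by
  classical
  revert h
  induction F using Finset.strongInduction with
  | _ F ih =>
  intro h
  rcases F.eq_empty_or_nonempty with rfl | hne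
  · intro d hd; exact absurd hd (by simp)
  set S := F.image (fun d => ∑ j, d (Sum.inr j)) with hS
  have hSne : S.Nonempty := hne.image _
  set m := S.min' hSne with hm
  obtain ⟨d1, hd1F, hd1⟩ := Finset.mem_image.mp (S.min'_mem hSne)
  set δ0 : Fin n →₀ ℕ := Finsupp.equivFunOnFinite.symm (fun j => d1 (Sum.inr j)) with hδ0def
  have hδ0 : ⇑δ0 = fun j => d1 (Sum.inr j) :=
    Finsupp.equivFunOnFinite.apply_symm_apply _
  have hsum0 : ∑ j, δ0 j = m := by
    rw [hδ0]; exact hd1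
  have hmle : ∀ d ∈ F, m ≤ ∑ j, d (Sum.inr j) := fun d hd =>
    Finset.min'_le S _ (Finset.mem_image_of_mem _ hd)
  set N : ℂ := ((∏ j, Nat.factorial (δ0 j) : ℕ) : ℂ) with hN
  have hNne : N ≠ 0 := by
    rw [hN]
    exact Nat.cast_ne_zero.mpr
      (Finset.prod_ne_zero_iff.mpr fun j _ => Nat.factorial_ne_zero _)
  -- the test element
  set s0 : Vn n := psi B (monomial δ0 1) with hs0
  have key0 : ∀ d ∈ F, (fun j => d (Sum.inr j)) ≠ ⇑δ0 →
      Dpow n A (fun j => d (Sum.inr j)) s0 = 0 := by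
    intro d hd hne2
    rw [hs0, Dpow_psi hAB]
    by_cases hle : ∀ j, d (Sum.inr j) ≤ δ0 j
    · exfalso
      have heq : ∀ j, d (Sum.inr j) = δ0 j := by
        by_contra hc
        push_neg at hc
        obtain ⟨j0, hj0⟩ := hc
        have hlt : d (Sum.inr j0) < δ0 j0 := lt_of_le_of_ne (hle j0) hj0
        have h1 : ∑ j, d (Sum.inr j) < ∑ j, δ0 j :=
          Finset.sum_lt_sum (fun j _ => hle j) ⟨j0, Finset.mem_univ j0, hlt⟩
        have h2 := hmle d hd
        omega
      exact hne2 (funext fun j => by rw [heq j])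
    · push_neg at hle
      obtain ⟨j0, hj0⟩ := hle
      rw [Ppow_monomial_ne _ _ j0 hj0, map_zero]
  have key1 : ∀ d : (Fin n ⊕ Fin n) →₀ ℕ, (fun j => d (Sum.inr j)) = ⇑δ0 →
      Dpow n A (fun j => d (Sum.inr j)) s0 = C N := by
    intro d he
    rw [hs0, Dpow_psi hAB, he, Ppow_monomial_self]
    rw [← MvPolynomial.algebraMap_eq, AlgHom.commutes, MvPolynomial.algebraMap_eq]
  -- split the sum
  set P : ((Fin n ⊕ Fin n) →₀ ℕ) → Prop := fun d => (fun j => d (Sum.inr j)) = ⇑δ0 with hP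
  have h0 := h s0
  rw [← Finset.sum_filter_add_sum_filter_not F P] at h0
  have hzero : ∑ d ∈ F.filter (fun d => ¬ P d),
      c d • ((∏ i, (X i : Vn n) ^ d (Sum.inl i)) * Dpow n A (fun j => d (Sum.inr j)) s0) = 0 := by
    refine Finset.sum_eq_zero fun d hd => ?_
    rw [Finset.mem_filter] at hd
    rw [key0 d hd.1 hd.2, mul_zero, smul_zero]
  rw [hzero, add_zero] at h0
  have h0' : ∑ d ∈ F.filter P,
      (c d * N) • monomial (Finsupp.equivFunOnFinite.symm fun i => d (Sum.inl i)) (1 : ℂ) = 0 := by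
    rw [← h0]
    refine Finset.sum_congr rfl fun d hd => ?_
    rw [Finset.mem_filter] at hd
    rw [key1 d hd.2]
    have hγ : (∏ i, (X i : Vn n) ^ d (Sum.inl i)) =
        monomial (Finsupp.equivFunOnFinite.symm fun i => d (Sum.inl i)) (1 : ℂ) := by
      rw [← prod_X_pow_univ]
      exact Finset.prod_congr rfl fun i _ => by
        simp
    rw [hγ, mul_comm (monomial _ _) (C N), ← MvPolynomial.smul_eq_C_mul, smul_smul]
  -- injectivity on the filtered set
  have hinj : ∀ d ∈ F.filter P, ∀ d' ∈ F.filter P,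
      (Finsupp.equivFunOnFinite.symm fun i => d (Sum.inl i) : Fin n →₀ ℕ) =
        (Finsupp.equivFunOnFinite.symm fun i => d' (Sum.inl i)) → d = d' := by
    intro d hd d' hd' hγ
    rw [Finset.mem_filter] at hd hd'
    have hγ' := Finsupp.equivFunOnFinite.symm.injective hγ
    ext x
    cases x with
    | inl i => exact congrFun hγ' i
    | inr j => rw [congrFun hd.2 j, congrFun hd'.2 j]
  have hG : ∀ d' ∈ F.filter P, c d' = 0 := by
    intro d' hd'
    have hcoeff := congrArg
      (MvPolynomial.coeff (Finsupp.equivFunOnFinite.symm fun i => d' (Sum.inl i))) h0'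
    rw [MvPolynomial.coeff_sum, MvPolynomial.coeff_zero] at hcoeff
    simp only [MvPolynomial.coeff_smul, MvPolynomial.coeff_monomial] at hcoeff
    rw [Finset.sum_eq_single_of_mem d' hd' (fun d hd hne2 => by
      rw [if_neg (fun hc => hne2 (hinj d hd d' hd' hc)), smul_zero])] at hcoeff
    rw [if_pos rfl, smul_eq_mul, mul_one] at hcoeff
    exact (mul_eq_zero.mp hcoeff).resolve_right hNne
  -- induction step on the complement
  have hss : F.filter (fun d => ¬ P d) ⊂ F := by
    refine Finset.filter_ssubset.mpr ⟨d1, hd1F, ?_⟩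
    simp only [not_not]
    exact hδ0.symm
  have hrest : ∀ s : Vn n, ∑ d ∈ F.filter (fun d => ¬ P d),
      c d • ((∏ i, (X i : Vn n) ^ d (Sum.inl i)) * Dpow n A (fun j => d (Sum.inr j)) s) = 0 := by
    intro s
    have hs := h s
    rw [← Finset.sum_filter_add_sum_filter_not F P] at hs
    have : ∑ d ∈ F.filter P,
        c d • ((∏ i, (X i : Vn n) ^ d (Sum.inl i)) * Dpow n A (fun j => d (Sum.inr j)) s) = 0 :=
      Finset.sum_eq_zero fun d hd => by rw [hG d hd, zero_smul]
    rw [this, zero_add] at hs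
    exact hs
  intro d hd
  by_cases hPd : P d
  · exact hG d (Finset.mem_filter.mpr ⟨hd, hPd⟩)
  · exact ih _ hss hrest d (Finset.mem_filter.mpr ⟨hd, hPd⟩)

end Stmt3Aux

namespace Stmt3Aux
-- continuing, same variables

lemma main_coeff (A : Fin n → Fin n → ℂ) (a : Wn n)
    (h : ∀ k : ℕ, 1 ≤ k → ∀ s : Vn n, bfAct n A (Complex.I / (k : ℂ)) a s = 0)
    (m : ℕ) (s : Vn n) :
    ∑ d ∈ a.support,
      (if (∑ j, d (Sum.inr j)) ≤ m
        then (MvPolynomial.coeff d a).coeff (m - ∑ j, d (Sum.inr j)) else (0 : ℂ)) •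
        ((∏ i, (X i : Vn n) ^ d (Sum.inl i)) * Dpow n A (fun j => d (Sum.inr j)) s) = 0 := by
  classical
  set Q : Polynomial (Vn n) := ∑ d ∈ a.support, ∑ l ∈ (MvPolynomial.coeff d a).support,
    Polynomial.C (((MvPolynomial.coeff d a).coeff l) •
      ((∏ i, (X i : Vn n) ^ d (Sum.inl i)) * Dpow n A (fun j => d (Sum.inr j)) s)) *
      Polynomial.X ^ (l + ∑ j, d (Sum.inr j)) with hQdef
  have heval : ∀ κ : ℂ, Polynomial.eval (MvPolynomial.C κ) Q = bfAct n A κ a s := by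
    intro κ
    rw [hQdef, Polynomial.eval_finset_sum, bfAct]
    refine Finset.sum_congr rfl fun d hd => ?_
    rw [Polynomial.eval_finset_sum, Polynomial.sum_def]
    refine Finset.sum_congr rfl fun l hl => ?_
    rw [Polynomial.eval_mul, Polynomial.eval_C, Polynomial.eval_pow, Polynomial.eval_X,
      MvPolynomial.smul_eq_C_mul, MvPolynomial.smul_eq_C_mul, ← map_pow, map_mul]
    ring
  have hQ0 : Q = 0 := by
    apply Polynomial.eq_zero_of_infinite_isRoot
    apply Set.infinite_of_injective_forall_mem
      (f := fun k : ℕ => (MvPolynomial.C (Complex.I / ((k : ℂ) + 1)) : Vn n))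
    · intro k1 k2 hk
      have h1 : Complex.I / ((k1 : ℂ) + 1) = Complex.I / ((k2 : ℂ) + 1) :=
        MvPolynomial.C_injective _ _ hk
      have hk1 : ((k1 : ℂ) + 1) ≠ 0 := Nat.cast_add_one_ne_zero k1
      have hk2 : ((k2 : ℂ) + 1) ≠ 0 := Nat.cast_add_one_ne_zero k2
      rw [div_eq_div_iff hk1 hk2] at h1
      have h2 := mul_left_cancel₀ Complex.I_ne_zero h1
      have : (k1 : ℂ) = (k2 : ℂ) := by linear_combination -h2
      exact_mod_cast this
    · intro k
      have hroot : bfAct n A (Complex.I / ((k + 1 : ℕ) : ℂ)) a s = 0 :=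
        h (k + 1) (Nat.le_add_left 1 k) s
      have : Polynomial.IsRoot Q (MvPolynomial.C (Complex.I / ((k : ℂ) + 1))) := by
        rw [Polynomial.IsRoot, heval]
        rw [show ((k : ℂ) + 1) = ((k + 1 : ℕ) : ℂ) by push_cast; ring]
        exact hroot
      exact this
  have hco : Polynomial.coeff Q m = 0 := by rw [hQ0, Polynomial.coeff_zero]
  rw [hQdef, Polynomial.finset_sum_coeff] at hco
  rw [← hco]
  refine Finset.sum_congr rfl fun d hd => ?_
  rw [Polynomial.finset_sum_coeff]
  have hterm : ∀ l, (Polynomial.C (((MvPolynomial.coeff d a).coeff l) •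
      ((∏ i, (X i : Vn n) ^ d (Sum.inl i)) * Dpow n A (fun j => d (Sum.inr j)) s)) *
      Polynomial.X ^ (l + ∑ j, d (Sum.inr j))).coeff m =
      if l + (∑ j, d (Sum.inr j)) = m
        then ((MvPolynomial.coeff d a).coeff l) •
          ((∏ i, (X i : Vn n) ^ d (Sum.inl i)) * Dpow n A (fun j => d (Sum.inr j)) s)
        else 0 := by
    intro l
    rw [Polynomial.coeff_C_mul, Polynomial.coeff_X_pow]
    by_cases hc : m = l + ∑ j, d (Sum.inr j)
    · rw [if_pos hc, if_pos hc.symm, mul_one]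
    · rw [if_neg hc, if_neg (fun hc2 => hc hc2.symm), mul_zero]
  by_cases hQle : (∑ j, d (Sum.inr j)) ≤ m
  · rw [if_pos hQle]
    have hiff : ∀ l : ℕ, (l + (∑ j, d (Sum.inr j)) = m) ↔ (l = m - ∑ j, d (Sum.inr j)) := by
      intro l; omega
    rw [Finset.sum_congr rfl fun l _ => (hterm l).trans (if_congr (hiff l) rfl rfl)]
    rw [Finset.sum_ite_eq' ((MvPolynomial.coeff d a).support) (m - ∑ j, d (Sum.inr j))]
    by_cases hmem : (m - ∑ j, d (Sum.inr j)) ∈ (MvPolynomial.coeff d a).support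
    · rw [if_pos hmem]
    · rw [if_neg hmem, Polynomial.notMem_support_iff.mp hmem, zero_smul]
  · rw [if_neg hQle, zero_smul]
    exact (Finset.sum_eq_zero fun l _ => by
      rw [hterm l, if_neg (by omega)]).symm

end Stmt3Aux


open Stmt3Aux in
/-- if the matrix `A` is invertible and `a ∈ Wn n` acts as zero on `Vn n`
under the level-`k` Bargmann–Fock action `⊛_{√-1/k}` for every level `k ≥ 1`,
then `a = 0`. -/
theorem stmt3 (n : ℕ) (A : Fin n → Fin n → ℂ)
    (hA : IsUnit (Matrix.of A : Matrix (Fin n) (Fin n) ℂ)) (a : Wn n)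
    (h : ∀ k : ℕ, 1 ≤ k → ∀ s : Vn n, bfAct n A (Complex.I / (k : ℂ)) a s = 0) :
    a = 0 := by
  classical
  obtain ⟨U, hU⟩ := hA
  set B : Fin n → Fin n → ℂ := fun k i => ((↑U⁻¹ : Matrix (Fin n) (Fin n) ℂ)) k i with hB
  have hAB : ∀ j i, ∑ m, A j m * B m i = if j = i then 1 else 0 := by
    intro j i
    have h1 : (Matrix.of A : Matrix (Fin n) (Fin n) ℂ) * (↑U⁻¹ : Matrix (Fin n) (Fin n) ℂ) = 1 := by
      rw [← hU]; exact U.mul_inv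
    calc ∑ m, A j m * B m i
        = ((Matrix.of A : Matrix (Fin n) (Fin n) ℂ) * (↑U⁻¹ : Matrix (Fin n) (Fin n) ℂ)) j i :=
          (Matrix.mul_apply).symm
      _ = (1 : Matrix (Fin n) (Fin n) ℂ) j i := by rw [h1]
      _ = if j = i then 1 else 0 := Matrix.one_apply
  have hvan : ∀ m : ℕ, ∀ d ∈ a.support,
      (if (∑ j, d (Sum.inr j)) ≤ m
        then (MvPolynomial.coeff d a).coeff (m - ∑ j, d (Sum.inr j)) else (0 : ℂ)) = 0 :=
    fun m => indep hAB _ _ (main_coeff A a h m)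
  apply MvPolynomial.ext
  intro d
  rw [MvPolynomial.coeff_zero]
  by_cases hd : d ∈ a.support
  · apply Polynomial.ext
    intro l
    have hv := hvan (l + ∑ j, d (Sum.inr j)) d hd
    rw [if_pos (Nat.le_add_left _ _), Nat.add_sub_cancel] at hv
    rw [hv, Polynomial.coeff_zero]
  · rw [MvPolynomial.notMem_support_iff.mp hd]

end
end

section
/- For all smooth functions f, g, h : ℝ^{2n} → ℂ the following hold: (i) each C_r(f, g) is a smooth function; (ii) C_0(f, g) = f · g (pointwise product); (iii) C_1(f, g) − C_1(g, f) = (1/2π) Σ_{i ∈ Fin n} (∂_{y^i} f · ∂_{x^i} g − ∂_{y^i} g · ∂_{x^i} f), which is the Poisson bracket of f and g for the symplectic form ω = 2π Σ_i dx^i ∧ dy^i; (iv) for every r ∈ ℕ, Σ_{a+b=r} C_a(f, C_b(g, h)) = Σ_{a+b=r} C_a(C_b(f, g), h). Consequently f ⋆ g := Σ_{r≥0} ħ^r C_r(f, g) is an associative star product, so (C^∞[[ħ]], ⋆) is a deformation quantization. (This instantiates Theorem 5.8 of the paper for the standard symplectic torus ℝ^{2n}/ℤ^{2n}, where the star product takes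 this explicit form.) -/
noncomputable section

/-- `ℝ^{2n}` written as pairs `(x, y)` with `x, y ∈ ℝ^n`. -/
abbrev En (n : ℕ) : Type := (Fin n → ℝ) × (Fin n → ℝ)

/-- Directional derivative of a smooth function in the direction `v`. -/
def pdir {E : Type} [NormedAddCommGroup E] [NormedSpace ℝ E] (v : E) (φ : E → ℂ) :
    E → ℂ :=
  fun z => fderiv ℝ φ z v

/-- Partial derivative `∂_{x^i}` on `ℝ^{2n}`. -/
def pdX (n : ℕ) (i : Fin n) : (En n → ℂ) → En n → ℂ :=
  pdir ((Pi.single i 1, 0) : En n)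

/-- Partial derivative `∂_{y^i}` on `ℝ^{2n}`. -/
def pdY (n : ℕ) (i : Fin n) : (En n → ℂ) → En n → ℂ :=
  pdir ((0, Pi.single i 1) : En n)

/-- Iterated derivative `∂_{y^{I(0)}} ⋯ ∂_{y^{I(r-1)}}`. -/
def pdYSeq (n : ℕ) {r : ℕ} (I : Fin r → Fin n) (φ : En n → ℂ) : En n → ℂ :=
  (List.ofFn fun t => pdY n (I t)).foldr (fun F ψ => F ψ) φ

/-- Iterated derivative `∂_{x^{I(0)}} ⋯ ∂_{x^{I(r-1)}}`. -/
def pdXSeq (n : ℕ) {r : ℕ} (I : Fin r → Fin n) (φ : En n → ℂ) : En n → ℂ :=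
  (List.ofFn fun t => pdX n (I t)).foldr (fun F ψ => F ψ) φ

/-- The bidifferential operators
`C_r(f, g) = (1/(r! (2π)^r)) Σ_{I : Fin r → Fin n} (∂_y^I f)(∂_x^I g)`
of the star product on the standard symplectic torus. -/
def Cop (n : ℕ) (f g : En n → ℂ) (r : ℕ) : En n → ℂ := fun z =>
  (1 / ((r.factorial : ℂ) * (2 * (Real.pi : ℂ)) ^ r)) *
    ∑ I : Fin r → Fin n, pdYSeq n I f z * pdXSeq n I g z

section Aux
variable {E : Type} [NormedAddCommGroup E] [NormedSpace ℝ E]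

lemma pdir_smooth (v : E) {φ : E → ℂ} (hφ : ContDiff ℝ (⊤ : ℕ∞) φ) :
    ContDiff ℝ (⊤ : ℕ∞) (pdir v φ) := by
  have h1 : ContDiff ℝ (⊤ : ℕ∞) (fderiv ℝ φ) := hφ.fderiv_right (by simp)
  exact (ContinuousLinearMap.apply ℝ ℂ v).contDiff.comp h1

lemma pdir_comm (u v : E) {φ : E → ℂ} (hφ : ContDiff ℝ (⊤ : ℕ∞) φ) :
    pdir u (pdir v φ) = pdir v (pdir u φ) := by
  funext z
  have hd : ∀ y, HasFDerivAt φ (fderiv ℝ φ y) y := fun y =>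
    (hφ.differentiable (by simp) y).hasFDerivAt
  have h1 : ContDiff ℝ (⊤ : ℕ∞) (fderiv ℝ φ) := hφ.fderiv_right (by simp)
  have hd2 : HasFDerivAt (fderiv ℝ φ) (fderiv ℝ (fderiv ℝ φ) z) z :=
    (h1.differentiable (by simp) z).hasFDerivAt
  have key : ∀ w : E, HasFDerivAt (fun y => fderiv ℝ φ y w)
      ((ContinuousLinearMap.apply ℝ ℂ w).comp (fderiv ℝ (fderiv ℝ φ) z)) z := fun w =>
    (ContinuousLinearMap.apply ℝ ℂ w).hasFDerivAt.comp z hd2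
  have e1 : pdir u (pdir v φ) z = fderiv ℝ (fderiv ℝ φ) z u v := by
    show fderiv ℝ (fun y => fderiv ℝ φ y v) z u = _
    rw [(key v).fderiv]; rfl
  have e2 : pdir v (pdir u φ) z = fderiv ℝ (fderiv ℝ φ) z v u := by
    show fderiv ℝ (fun y => fderiv ℝ φ y u) z v = _
    rw [(key u).fderiv]; rfl
  rw [e1, e2, second_derivative_symmetric hd hd2 u v]

lemma pdir_add (v : E) {φ ψ : E → ℂ} (hφ : Differentiable ℝ φ) (hψ : Differentiable ℝ ψ) :
    pdir v (fun z => φ z + ψ z) = fun z => pdir v φ z + pdir v ψ z := by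
  funext z
  simp [pdir, fderiv_fun_add (hφ z) (hψ z)]

lemma pdir_const_mul (v : E) (c : ℂ) {φ : E → ℂ} (hφ : Differentiable ℝ φ) :
    pdir v (fun z => c * φ z) = fun z => c * pdir v φ z := by
  funext z
  simp [pdir, fderiv_const_mul (hφ z) c]

lemma pdir_mul (v : E) {φ ψ : E → ℂ} (hφ : Differentiable ℝ φ) (hψ : Differentiable ℝ ψ) :
    pdir v (fun z => φ z * ψ z) = fun z => pdir v φ z * ψ z + φ z * pdir v ψ z := by
  funext z
  simp [pdir, fderiv_fun_mul (hφ z) (hψ z)]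
  ring

lemma pdir_sum (v : E) {ι : Type*} (s : Finset ι) {F : ι → E → ℂ}
    (hF : ∀ j ∈ s, Differentiable ℝ (F j)) :
    pdir v (fun z => ∑ j ∈ s, F j z) = fun z => ∑ j ∈ s, pdir v (F j) z := by
  funext z
  simp only [pdir]
  rw [fderiv_fun_sum (fun j hj => (hF j hj) z)]
  simp

end Aux
section Seq
variable {n : ℕ}

/-- generic iterated directional derivative along directions `w ∘ I`. -/
def dseq (n : ℕ) (w : Fin n → En n) {r : ℕ} (I : Fin r → Fin n) (φ : En n → ℂ) : En n → ℂ :=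
  (List.ofFn fun t => pdir (w (I t))).foldr (fun F ψ => F ψ) φ

lemma pdYSeq_eq {r : ℕ} (I : Fin r → Fin n) (φ : En n → ℂ) :
    pdYSeq n I φ = dseq n (fun i => ((0, Pi.single i 1) : En n)) I φ := rfl

lemma pdXSeq_eq {r : ℕ} (I : Fin r → Fin n) (φ : En n → ℂ) :
    pdXSeq n I φ = dseq n (fun i => ((Pi.single i 1, 0) : En n)) I φ := rfl

variable (w : Fin n → En n)

lemma dseq_zero (I : Fin 0 → Fin n) (φ : En n → ℂ) : dseq n w I φ = φ := by
  simp [dseq]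

lemma dseq_cons {r : ℕ} (j : Fin n) (I : Fin r → Fin n) (φ : En n → ℂ) :
    dseq n w (Fin.cons j I) φ = pdir (w j) (dseq n w I φ) := by
  simp [dseq, List.ofFn_succ]

lemma dseq_snoc {r : ℕ} (I : Fin r → Fin n) (i : Fin n) (φ : En n → ℂ) :
    dseq n w (Fin.snoc I i) φ = dseq n w I (pdir (w i) φ) := by
  simp only [dseq, List.ofFn_succ', List.concat_eq_append, List.foldr_append, List.foldr, Fin.snoc_castSucc, Fin.snoc_last]

lemma dseq_smooth : ∀ {r : ℕ} (I : Fin r → Fin n) {φ : En n → ℂ},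
    ContDiff ℝ (⊤ : ℕ∞) φ → ContDiff ℝ (⊤ : ℕ∞) (dseq n w I φ)
  | 0, I, φ, hφ => by rw [dseq_zero]; exact hφ
  | (r+1), I, φ, hφ => by
    rw [← Fin.cons_self_tail I, dseq_cons]
    exact pdir_smooth _ (dseq_smooth (Fin.tail I) hφ)

lemma dseq_pdir (v : En n) : ∀ {r : ℕ} (I : Fin r → Fin n) {φ : En n → ℂ},
    ContDiff ℝ (⊤ : ℕ∞) φ → pdir v (dseq n w I φ) = dseq n w I (pdir v φ)
  | 0, I, φ, hφ => by rw [dseq_zero, dseq_zero]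
  | (r+1), I, φ, hφ => by
    rw [← Fin.cons_self_tail I, dseq_cons, dseq_cons,
      pdir_comm v (w (I 0)) (dseq_smooth w _ hφ),
      dseq_pdir v (Fin.tail I) hφ]

lemma dseq_add : ∀ {r : ℕ} (I : Fin r → Fin n) {φ ψ : En n → ℂ},
    ContDiff ℝ (⊤ : ℕ∞) φ → ContDiff ℝ (⊤ : ℕ∞) ψ →
    dseq n w I (fun z => φ z + ψ z) = fun z => dseq n w I φ z + dseq n w I ψ z
  | 0, I, φ, ψ, hφ, hψ => by rw [dseq_zero, dseq_zero, dseq_zero]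
  | (r+1), I, φ, ψ, hφ, hψ => by
    rw [← Fin.cons_self_tail I, dseq_cons, dseq_cons, dseq_cons,
      dseq_add (Fin.tail I) hφ hψ,
      pdir_add _ ((dseq_smooth w _ hφ).differentiable (by simp))
        ((dseq_smooth w _ hψ).differentiable (by simp))]

lemma dseq_const_mul (c : ℂ) : ∀ {r : ℕ} (I : Fin r → Fin n) {φ : En n → ℂ},
    ContDiff ℝ (⊤ : ℕ∞) φ →
    dseq n w I (fun z => c * φ z) = fun z => c * dseq n w I φ z
  | 0, I, φ, hφ => by rw [dseq_zero, dseq_zero]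
  | (r+1), I, φ, hφ => by
    rw [← Fin.cons_self_tail I, dseq_cons, dseq_cons,
      dseq_const_mul c (Fin.tail I) hφ,
      pdir_const_mul _ c ((dseq_smooth w _ hφ).differentiable (by simp))]

lemma dseq_sum {ι : Type*} (s : Finset ι) {F : ι → En n → ℂ}
    (hF : ∀ j ∈ s, ContDiff ℝ (⊤ : ℕ∞) (F j)) {r : ℕ} (I : Fin r → Fin n) :
    dseq n w I (fun z => ∑ j ∈ s, F j z) = fun z => ∑ j ∈ s, dseq n w I (F j) z := by
  classical
  induction s using Finset.induction with
  | empty =>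
    simp only [Finset.sum_empty]
    have : dseq n w I (fun _ => (0:ℂ)) = fun _ => (0:ℂ) := by
      have := dseq_const_mul w 0 I (contDiff_const (c := (0:ℂ)))
      simpa using this
    simpa using this
  | @insert a s' hj ih =>
    simp only [Finset.sum_insert hj]
    rw [dseq_add w I (hF a (Finset.mem_insert_self a s'))
        (ContDiff.sum fun j hjs => hF j (Finset.mem_insert_of_mem hjs)),
      ih (fun j hjs => hF j (Finset.mem_insert_of_mem hjs))]

end Seq
section CopLemmas
variable {n : ℕ}

/-- y-directions -/
def wY (n : ℕ) : Fin n → En n := fun i => ((0, Pi.single i 1) : En n)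
/-- x-directions -/
def wX (n : ℕ) : Fin n → En n := fun i => ((Pi.single i 1, 0) : En n)

lemma pdYSeq_eq' {r : ℕ} (I : Fin r → Fin n) (φ : En n → ℂ) :
    pdYSeq n I φ = dseq n (wY n) I φ := rfl

lemma pdXSeq_eq' {r : ℕ} (I : Fin r → Fin n) (φ : En n → ℂ) :
    pdXSeq n I φ = dseq n (wX n) I φ := rfl

lemma pdY_eq (i : Fin n) (φ : En n → ℂ) : pdY n i φ = pdir (wY n i) φ := rfl
lemma pdX_eq (i : Fin n) (φ : En n → ℂ) : pdX n i φ = pdir (wX n i) φ := rfl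

lemma pdYSeq_smooth {r : ℕ} (I : Fin r → Fin n) {φ : En n → ℂ} (hφ : ContDiff ℝ (⊤ : ℕ∞) φ) :
    ContDiff ℝ (⊤ : ℕ∞) (pdYSeq n I φ) := by
  rw [pdYSeq_eq']; exact dseq_smooth _ I hφ

lemma pdXSeq_smooth {r : ℕ} (I : Fin r → Fin n) {φ : En n → ℂ} (hφ : ContDiff ℝ (⊤ : ℕ∞) φ) :
    ContDiff ℝ (⊤ : ℕ∞) (pdXSeq n I φ) := by
  rw [pdXSeq_eq']; exact dseq_smooth _ I hφ

lemma Cop_smooth {u w : En n → ℂ} (hu : ContDiff ℝ (⊤ : ℕ∞) u) (hw : ContDiff ℝ (⊤ : ℕ∞) w) (r : ℕ) :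
    ContDiff ℝ (⊤ : ℕ∞) (Cop n u w r) := by
  apply ContDiff.mul contDiff_const
  exact ContDiff.sum fun I _ => (pdYSeq_smooth I hu).mul (pdXSeq_smooth I hw)

lemma Cop_zero (u w : En n → ℂ) : Cop n u w 0 = fun z => u z * w z := by
  funext z
  simp [Cop, pdYSeq, pdXSeq]

lemma Cop_succ (u w : En n → ℂ) (b : ℕ) :
    Cop n u w (b + 1) = fun z =>
      (1 / (((b : ℂ) + 1) * (2 * (Real.pi : ℂ)))) *
        ∑ i : Fin n, Cop n (pdY n i u) (pdX n i w) b z := by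
  funext z
  have hpi : (Real.pi : ℂ) ≠ 0 := by
    exact_mod_cast Complex.ofReal_ne_zero.mpr Real.pi_ne_zero
  have hfac : ((b.factorial : ℂ)) ≠ 0 := by
    exact_mod_cast Nat.cast_ne_zero.mpr (Nat.factorial_ne_zero b)
  have hb1 : ((b : ℂ) + 1) ≠ 0 := Nat.cast_add_one_ne_zero b
  -- reindex the sum over `Fin (b+1) → Fin n` by snoc
  let e := Fin.snocEquiv (fun _ : Fin (b + 1) => Fin n)
  have hsum :
      (∑ J : Fin (b + 1) → Fin n, pdYSeq n J u z * pdXSeq n J w z) =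
        ∑ p : Fin n × (Fin b → Fin n),
          pdYSeq n p.2 (pdY n p.1 u) z * pdXSeq n p.2 (pdX n p.1 w) z := by
    rw [← Fintype.sum_equiv e
      (fun p => pdYSeq n p.2 (pdY n p.1 u) z * pdXSeq n p.2 (pdX n p.1 w) z)
      (fun J => pdYSeq n J u z * pdXSeq n J w z) ?_]
    intro p
    have h1 : pdYSeq n (e p) u = pdYSeq n p.2 (pdY n p.1 u) := by
      rw [pdYSeq_eq', pdYSeq_eq']
      have he : e p = Fin.snoc p.2 p.1 := funext fun j => rfl
      rw [he, dseq_snoc]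
      rfl
    have h2 : pdXSeq n (e p) w = pdXSeq n p.2 (pdX n p.1 w) := by
      rw [pdXSeq_eq', pdXSeq_eq']
      have he : e p = Fin.snoc p.2 p.1 := funext fun j => rfl
      rw [he, dseq_snoc]
      rfl
    show pdYSeq n p.2 (pdY n p.1 u) z * pdXSeq n p.2 (pdX n p.1 w) z =
      pdYSeq n (e p) u z * pdXSeq n (e p) w z
    rw [h1, h2]
  rw [Cop, hsum, Fintype.sum_prod_type]
  simp only [Cop]
  conv_rhs => rw [← Finset.mul_sum]
  rw [← mul_assoc]
  congr 1
  push_cast [Nat.factorial_succ]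
  field_simp
  ring

end CopLemmas
section CopLemmas2
variable {n : ℕ}

lemma Cop_pdir (v : En n) {u w : En n → ℂ} (hu : ContDiff ℝ (⊤ : ℕ∞) u) (hw : ContDiff ℝ (⊤ : ℕ∞) w)
    (b : ℕ) :
    pdir v (Cop n u w b) = fun z => Cop n (pdir v u) w b z + Cop n u (pdir v w) b z := by
  funext z
  have hsum : Differentiable ℝ (fun z => ∑ I : Fin b → Fin n,
      pdYSeq n I u z * pdXSeq n I w z) :=
    (ContDiff.sum fun I _ => (pdYSeq_smooth I hu).mul (pdXSeq_smooth I hw)).differentiable (by simp)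
  have h0 : pdir v (Cop n u w b) z =
      (1 / ((b.factorial : ℂ) * (2 * (Real.pi : ℂ)) ^ b)) *
        pdir v (fun z => ∑ I : Fin b → Fin n, pdYSeq n I u z * pdXSeq n I w z) z :=
    congrFun (pdir_const_mul v _ hsum) z
  rw [h0, congrFun (pdir_sum v Finset.univ fun I _ =>
    ((pdYSeq_smooth I hu).mul (pdXSeq_smooth I hw)).differentiable (by simp)) z]
  have hterm : ∀ I : Fin b → Fin n,
      pdir v (fun z => pdYSeq n I u z * pdXSeq n I w z) z =
        pdYSeq n I (pdir v u) z * pdXSeq n I w z +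
          pdYSeq n I u z * pdXSeq n I (pdir v w) z := by
    intro I
    rw [congrFun (pdir_mul v ((pdYSeq_smooth I hu).differentiable (by simp))
      ((pdXSeq_smooth I hw).differentiable (by simp))) z]
    rw [pdYSeq_eq', pdXSeq_eq', dseq_pdir _ v I hu, dseq_pdir _ v I hw,
      ← pdYSeq_eq', ← pdXSeq_eq', ← pdYSeq_eq', ← pdXSeq_eq']
  rw [Finset.sum_congr rfl fun I _ => hterm I, Finset.sum_add_distrib, mul_add]
  rfl

lemma Cop_add_right {u w1 w2 : En n → ℂ} (hw1 : ContDiff ℝ (⊤ : ℕ∞) w1) (hw2 : ContDiff ℝ (⊤ : ℕ∞) w2)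
    (b : ℕ) :
    Cop n u (fun z => w1 z + w2 z) b = fun z => Cop n u w1 b z + Cop n u w2 b z := by
  funext z
  simp only [Cop]
  rw [← mul_add, ← Finset.sum_add_distrib]
  congr 1
  apply Finset.sum_congr rfl
  intro I _
  rw [pdXSeq_eq', dseq_add _ I hw1 hw2, ← pdXSeq_eq', ← pdXSeq_eq']
  ring

lemma Cop_add_left {u1 u2 w : En n → ℂ} (hu1 : ContDiff ℝ (⊤ : ℕ∞) u1) (hu2 : ContDiff ℝ (⊤ : ℕ∞) u2)
    (b : ℕ) :
    Cop n (fun z => u1 z + u2 z) w b = fun z => Cop n u1 w b z + Cop n u2 w b z := by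
  funext z
  simp only [Cop]
  rw [← mul_add, ← Finset.sum_add_distrib]
  congr 1
  apply Finset.sum_congr rfl
  intro I _
  rw [pdYSeq_eq', dseq_add _ I hu1 hu2, ← pdYSeq_eq', ← pdYSeq_eq']
  ring

lemma Cop_const_mul_right (c : ℂ) {u w : En n → ℂ} (hw : ContDiff ℝ (⊤ : ℕ∞) w) (b : ℕ) :
    Cop n u (fun z => c * w z) b = fun z => c * Cop n u w b z := by
  funext z
  simp only [Cop]
  have hs : (∑ I : Fin b → Fin n, pdYSeq n I u z * pdXSeq n I (fun z => c * w z) z) =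
      c * ∑ I : Fin b → Fin n, pdYSeq n I u z * pdXSeq n I w z := by
    rw [Finset.mul_sum]
    apply Finset.sum_congr rfl
    intro I _
    have hx : pdXSeq n I (fun z => c * w z) = fun z => c * pdXSeq n I w z :=
      dseq_const_mul (wX n) c I hw
    rw [congrFun hx z]; ring
  rw [hs]; ring

lemma Cop_const_mul_left (c : ℂ) {u w : En n → ℂ} (hu : ContDiff ℝ (⊤ : ℕ∞) u) (b : ℕ) :
    Cop n (fun z => c * u z) w b = fun z => c * Cop n u w b z := by
  funext z
  simp only [Cop]
  have hs : (∑ I : Fin b → Fin n, pdYSeq n I (fun z => c * u z) z * pdXSeq n I w z) =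
      c * ∑ I : Fin b → Fin n, pdYSeq n I u z * pdXSeq n I w z := by
    rw [Finset.mul_sum]
    apply Finset.sum_congr rfl
    intro I _
    have hy : pdYSeq n I (fun z => c * u z) = fun z => c * pdYSeq n I u z :=
      dseq_const_mul (wY n) c I hu
    rw [congrFun hy z]; ring
  rw [hs]; ring

lemma Cop_sum_right {ι : Type*} (s : Finset ι) {u : En n → ℂ} {W : ι → En n → ℂ}
    (hW : ∀ j ∈ s, ContDiff ℝ (⊤ : ℕ∞) (W j)) (b : ℕ) :
    Cop n u (fun z => ∑ j ∈ s, W j z) b = fun z => ∑ j ∈ s, Cop n u (W j) b z := by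
  funext z
  simp only [Cop]
  have hs : (∑ I : Fin b → Fin n, pdYSeq n I u z * pdXSeq n I (fun z => ∑ j ∈ s, W j z) z) =
      ∑ j ∈ s, ∑ I : Fin b → Fin n, pdYSeq n I u z * pdXSeq n I (W j) z := by
    rw [Finset.sum_comm]
    apply Finset.sum_congr rfl
    intro I _
    have hx : pdXSeq n I (fun z => ∑ j ∈ s, W j z) = fun z => ∑ j ∈ s, pdXSeq n I (W j) z :=
      dseq_sum (wX n) s hW I
    rw [congrFun hx z, Finset.mul_sum]
  rw [hs, Finset.mul_sum]

lemma Cop_sum_left {ι : Type*} (s : Finset ι) {U : ι → En n → ℂ} {w : En n → ℂ}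
    (hU : ∀ j ∈ s, ContDiff ℝ (⊤ : ℕ∞) (U j)) (b : ℕ) :
    Cop n (fun z => ∑ j ∈ s, U j z) w b = fun z => ∑ j ∈ s, Cop n (U j) w b z := by
  funext z
  simp only [Cop]
  have hs : (∑ I : Fin b → Fin n, pdYSeq n I (fun z => ∑ j ∈ s, U j z) z * pdXSeq n I w z) =
      ∑ j ∈ s, ∑ I : Fin b → Fin n, pdYSeq n I (U j) z * pdXSeq n I w z := by
    rw [Finset.sum_comm]
    apply Finset.sum_congr rfl
    intro I _
    have hy : pdYSeq n I (fun z => ∑ j ∈ s, U j z) = fun z => ∑ j ∈ s, pdYSeq n I (U j) z :=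
      dseq_sum (wY n) s hU I
    rw [congrFun hy z, Finset.sum_mul]
  rw [hs, Finset.mul_sum]

end CopLemmas2
section Assoc
variable {n : ℕ}

lemma Cop_assoc (n : ℕ) (r : ℕ) : ∀ ⦃f g h : En n → ℂ⦄,
    ContDiff ℝ (⊤ : ℕ∞) f → ContDiff ℝ (⊤ : ℕ∞) g → ContDiff ℝ (⊤ : ℕ∞) h → ∀ z : En n,
    (∑ ab ∈ Finset.HasAntidiagonal.antidiagonal r, Cop n f (Cop n g h ab.2) ab.1 z) =
      ∑ ab ∈ Finset.HasAntidiagonal.antidiagonal r, Cop n (Cop n f g ab.2) h ab.1 z := by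
  induction r with
  | zero =>
    intro f g h hf hg hh z
    simp [Finset.Nat.antidiagonal_zero, Cop_zero, mul_assoc]
  | succ r ih =>
    intro f g h hf hg hh z
    apply mul_left_cancel₀ (a := ((r:ℂ)+1)) (Nat.cast_add_one_ne_zero r)
    have cancel : ∀ (a : ℕ) (S : ℂ),
        ((a:ℂ)+1) * (1/(((a:ℂ)+1)*(2 * (Real.pi : ℂ))) * S) = 1/(2 * (Real.pi : ℂ)) * S := by
      intro a S
      rw [one_div, mul_inv, ← mul_assoc, ← mul_assoc,
        mul_inv_cancel₀ (Nat.cast_add_one_ne_zero a), one_mul, one_div]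
    have hkey : ∀ (a : ℕ) (u w : En n → ℂ) (z : En n),
        ((a:ℂ)+1) * Cop n u w (a+1) z =
          1/(2 * (Real.pi : ℂ)) * ∑ i : Fin n, Cop n (pdY n i u) (pdX n i w) a z := by
      intro a u w z
      rw [Cop_succ]
      exact cancel a _
    -- LHS expansion
    have hL1 : ∀ p ∈ Finset.HasAntidiagonal.antidiagonal r,
        ((p.1:ℂ)+1) * Cop n f (Cop n g h p.2) (p.1+1) z =
          1/(2 * (Real.pi : ℂ)) * ∑ i : Fin n,
            (Cop n (pdY n i f) (Cop n (pdX n i g) h p.2) p.1 z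
              + Cop n (pdY n i f) (Cop n g (pdX n i h) p.2) p.1 z) := by
      intro p _
      rw [hkey p.1 f (Cop n g h p.2) z]
      congr 1
      apply Finset.sum_congr rfl
      intro i _
      have hXD : pdX n i (Cop n g h p.2) =
          fun z => Cop n (pdX n i g) h p.2 z + Cop n g (pdX n i h) p.2 z :=
        Cop_pdir (wX n i) hg hh p.2
      have h1 : ContDiff ℝ (⊤ : ℕ∞) (pdX n i g) := pdir_smooth _ hg
      have h2 : ContDiff ℝ (⊤ : ℕ∞) (pdX n i h) := pdir_smooth _ hh
      rw [hXD, Cop_add_right (Cop_smooth h1 hh p.2) (Cop_smooth hg h2 p.2) p.1]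
    have hL2 : ∀ p ∈ Finset.HasAntidiagonal.antidiagonal r,
        ((p.2:ℂ)+1) * Cop n f (Cop n g h (p.2+1)) p.1 z =
          1/(2 * (Real.pi : ℂ)) * ∑ i : Fin n,
            Cop n f (Cop n (pdY n i g) (pdX n i h) p.2) p.1 z := by
      intro p _
      have hsm : ∀ i : Fin n, ContDiff ℝ (⊤ : ℕ∞) (Cop n (pdY n i g) (pdX n i h) p.2) := fun i =>
        Cop_smooth (pdir_smooth _ hg) (pdir_smooth _ hh) p.2
      rw [Cop_succ g h p.2,
        Cop_const_mul_right _ (ContDiff.sum fun i _ => hsm i) p.1,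
        Cop_sum_right Finset.univ (fun i _ => hsm i) p.1]
      exact cancel p.2 _
    -- RHS expansion
    have hR1 : ∀ p ∈ Finset.HasAntidiagonal.antidiagonal r,
        ((p.1:ℂ)+1) * Cop n (Cop n f g p.2) h (p.1+1) z =
          1/(2 * (Real.pi : ℂ)) * ∑ i : Fin n,
            (Cop n (Cop n (pdY n i f) g p.2) (pdX n i h) p.1 z
              + Cop n (Cop n f (pdY n i g) p.2) (pdX n i h) p.1 z) := by
      intro p _
      rw [hkey p.1 (Cop n f g p.2) h z]
      congr 1
      apply Finset.sum_congr rfl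
      intro i _
      have hYD : pdY n i (Cop n f g p.2) =
          fun z => Cop n (pdY n i f) g p.2 z + Cop n f (pdY n i g) p.2 z :=
        Cop_pdir (wY n i) hf hg p.2
      have h1 : ContDiff ℝ (⊤ : ℕ∞) (pdY n i f) := pdir_smooth _ hf
      have h2 : ContDiff ℝ (⊤ : ℕ∞) (pdY n i g) := pdir_smooth _ hg
      rw [hYD, Cop_add_left (Cop_smooth h1 hg p.2) (Cop_smooth hf h2 p.2) p.1]
    have hR2 : ∀ p ∈ Finset.HasAntidiagonal.antidiagonal r,
        ((p.2:ℂ)+1) * Cop n (Cop n f g (p.2+1)) h p.1 z =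
          1/(2 * (Real.pi : ℂ)) * ∑ i : Fin n,
            Cop n (Cop n (pdY n i f) (pdX n i g) p.2) h p.1 z := by
      intro p _
      have hsm : ∀ i : Fin n, ContDiff ℝ (⊤ : ℕ∞) (Cop n (pdY n i f) (pdX n i g) p.2) := fun i =>
        Cop_smooth (pdir_smooth _ hf) (pdir_smooth _ hg) p.2
      rw [Cop_succ f g p.2,
        Cop_const_mul_left _ (ContDiff.sum fun i _ => hsm i) p.1,
        Cop_sum_left Finset.univ (fun i _ => hsm i) p.1]
      exact cancel p.2 _
    -- split (r+1) * sum into the two reindexed sums, generically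
    have hsplit : ∀ T : ℕ × ℕ → ℂ,
        ((r:ℂ)+1) * ∑ ab ∈ Finset.HasAntidiagonal.antidiagonal (r+1), T ab =
          (∑ p ∈ Finset.HasAntidiagonal.antidiagonal r, ((p.1:ℂ)+1) * T (p.1+1, p.2))
            + ∑ p ∈ Finset.HasAntidiagonal.antidiagonal r, ((p.2:ℂ)+1) * T (p.1, p.2+1) := by
      intro T
      rw [Finset.mul_sum]
      have step : ∀ ab ∈ Finset.HasAntidiagonal.antidiagonal (r+1),
          ((r:ℂ)+1) * T ab = (ab.1:ℂ) * T ab + (ab.2:ℂ) * T ab := by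
        intro ab hab
        have hmem : ab.1 + ab.2 = r + 1 := Finset.HasAntidiagonal.mem_antidiagonal.mp hab
        have : ((ab.1:ℂ) + (ab.2:ℂ)) = ((r:ℂ)+1) := by
          exact_mod_cast congrArg (fun m : ℕ => (m : ℂ)) hmem
        rw [← this, add_mul]
      rw [Finset.sum_congr rfl step, Finset.sum_add_distrib]
      congr 1
      · rw [Finset.Nat.sum_antidiagonal_succ
          (f := fun ab => (ab.1:ℂ) * T ab)]
        push_cast
        simp
      · rw [Finset.Nat.sum_antidiagonal_succ'
          (f := fun ab => (ab.2:ℂ) * T ab)]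
        push_cast
        simp
    rw [hsplit (fun ab => Cop n f (Cop n g h ab.2) ab.1 z),
        hsplit (fun ab => Cop n (Cop n f g ab.2) h ab.1 z),
        Finset.sum_congr rfl hL1, Finset.sum_congr rfl hL2,
        Finset.sum_congr rfl hR1, Finset.sum_congr rfl hR2,
        ← Finset.mul_sum, ← Finset.mul_sum, ← Finset.mul_sum, ← Finset.mul_sum,
        ← mul_add, ← mul_add]
    congr 1
    have swap : ∀ F : ℕ × ℕ → Fin n → ℂ,
        (∑ p ∈ Finset.HasAntidiagonal.antidiagonal r, ∑ i : Fin n, F p i) =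
          ∑ i : Fin n, ∑ p ∈ Finset.HasAntidiagonal.antidiagonal r, F p i := fun F => Finset.sum_comm
    rw [swap, swap, swap, swap, ← Finset.sum_add_distrib, ← Finset.sum_add_distrib]
    apply Finset.sum_congr rfl
    intro i _
    have hYf : ContDiff ℝ (⊤ : ℕ∞) (pdY n i f) := pdir_smooth _ hf
    have hYg : ContDiff ℝ (⊤ : ℕ∞) (pdY n i g) := pdir_smooth _ hg
    have hXg : ContDiff ℝ (⊤ : ℕ∞) (pdX n i g) := pdir_smooth _ hg
    have hXh : ContDiff ℝ (⊤ : ℕ∞) (pdX n i h) := pdir_smooth _ hh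
    rw [Finset.sum_add_distrib, Finset.sum_add_distrib,
      ih hYf hXg hh z, ih hYf hg hXh z, ih hf hYg hXh z]
    ring
end Assoc
section One
variable {n : ℕ}

lemma pdYSeq_one (I : Fin 1 → Fin n) (φ : En n → ℂ) : pdYSeq n I φ = pdY n (I 0) φ := by
  conv_lhs => rw [pdYSeq_eq', ← Fin.cons_self_tail I, dseq_cons, dseq_zero]
  rfl

lemma pdXSeq_one (I : Fin 1 → Fin n) (φ : En n → ℂ) : pdXSeq n I φ = pdX n (I 0) φ := by
  conv_lhs => rw [pdXSeq_eq', ← Fin.cons_self_tail I, dseq_cons, dseq_zero]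
  rfl

lemma Cop_one (u w : En n → ℂ) (z : En n) :
    Cop n u w 1 z = (1 / (2 * (Real.pi : ℂ))) * ∑ i : Fin n, pdY n i u z * pdX n i w z := by
  simp only [Cop]
  congr 1
  · norm_num
  · refine Fintype.sum_equiv (Equiv.funUnique (Fin 1) (Fin n)) _ _ fun I => ?_
    rw [pdYSeq_one, pdXSeq_one]
    rfl

end One
/-- the bidifferential operators `C_r` define a deformation quantization:
they preserve smoothness, `C_0` is the pointwise product, the antisymmetrization of `C_1`
is the Poisson bracket of `ω = 2π Σ_i dx^i ∧ dy^i`, and the associativity relations hold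
in each order of `ħ`. -/
theorem stmt4 (n : ℕ) (hn : 0 < n) (f g h : En n → ℂ)
    (hf : ContDiff ℝ (⊤ : ℕ∞) f) (hg : ContDiff ℝ (⊤ : ℕ∞) g) (hh : ContDiff ℝ (⊤ : ℕ∞) h) :
    (∀ r : ℕ, ContDiff ℝ (⊤ : ℕ∞) (Cop n f g r)) ∧
    (Cop n f g 0 = fun z => f z * g z) ∧
    (∀ z : En n, Cop n f g 1 z - Cop n g f 1 z =
      (1 / (2 * (Real.pi : ℂ))) *
        ∑ i : Fin n, (pdY n i f z * pdX n i g z - pdY n i g z * pdX n i f z)) ∧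
    (∀ (r : ℕ) (z : En n),
      ∑ ab ∈ Finset.HasAntidiagonal.antidiagonal r, Cop n f (Cop n g h ab.2) ab.1 z =
        ∑ ab ∈ Finset.HasAntidiagonal.antidiagonal r, Cop n (Cop n f g ab.2) h ab.1 z) := by
  refine ⟨fun r => Cop_smooth hf hg r, Cop_zero f g, fun z => ?_,
    fun r z => Cop_assoc n r hf hg hh z⟩
  rw [Cop_one f g z, Cop_one g f z, ← mul_sub, ← Finset.sum_sub_distrib]

end
end
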